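/- arXiv:2007.03820 — 6 statements merged into one kernel-verified Lean document; each statement's English description precedes it below -/
import Mathlib

section
/- Let α > 0 and let G be a graph on n vertices with at least (5/9 + α)·n²/2 edges. Define A = {x ∈ V(G) : deg(x) < n/3} and B = {x ∈ V(G) : |N(x) \ A| ≤ αn/3}. Then the number of edges of G with both endpoints in A ∪ B is at most n²/18. -/
/-!
Put `B' = B \ A`, `a = |A|`, `b = |B'|` and count ordered adjacent pairs. Splitting the degree sum
of `G` along `A ∪ B'` and its complement, and using that vertices of `A` have degree at most `n/3`,
that vertices of `B'` have at most `αn/3` neighbours outside `A`, and that the complement spans at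
most `(n - a - b)²` ordered pairs, gives
`2e(G) + 2e(A ∪ B) ≤ 2(an/3 + e(A, B') + αbn/3) + (n - a - b)²` with `2e(A, B') ≤ 2e(A ∪ B)`
and `e(A, B') ≤ ab`. Together with `2e(G) ≥ (5/9 + α)n²` and `2e(G) ≤ an/3 + (n - a)n`, this
reduces to a quadratic inequality in `a/n` and `b/n`. When `a + b ≤ n/3`, the trivial bound
`2e(A ∪ B) ≤ (a + b)²` suffices.
-/

open Finset

theorem quadratic_bound_of_unit_sum {α x y : ℝ} (hα : 0 ≤ α) (hxy : x + y ≤ 1)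
    (hs : 1 / 3 ≤ x + y) (h₁ : 5 / 9 + α ≤ 2 * x / 3 + 2 * α * y / 3 + (1 - x - y) ^ 2)
    (h₂ : 5 / 9 + α ≤ 1 - 2 * x / 3) :
    2 * x / 3 + 2 * α * y / 3 + 2 * x * y + (1 - x - y) ^ 2 ≤ 2 / 3 + α := by
  nlinarith [sq_nonneg (x + y - 1 / 3), sq_nonneg y]

theorem quadratic_bound {α a b n : ℝ} (hα : 0 ≤ α) (hn : 0 < n) (hab : a + b ≤ n)
    (hs : n / 3 ≤ a + b)
    (h₁ : (5 / 9 + α) * n ^ 2 ≤ 2 * a * n / 3 + 2 * α * b * n / 3 + (n - a - b) ^ 2)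
    (h₂ : (5 / 9 + α) * n ^ 2 ≤ n ^ 2 - 2 * a * n / 3) :
    2 * a * n / 3 + 2 * α * b * n / 3 + 2 * a * b + (n - a - b) ^ 2 ≤ (2 / 3 + α) * n ^ 2 := by
  obtain ⟨x, rfl⟩ : ∃ x, a = x * n := ⟨a / n, (div_mul_cancel₀ a hn.ne').symm⟩
  obtain ⟨y, rfl⟩ : ∃ y, b = y * n := ⟨b / n, (div_mul_cancel₀ b hn.ne').symm⟩
  have hn2 : 0 < n ^ 2 := by positivity
  have key := quadratic_bound_of_unit_sum (x := x) (y := y) hα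
    (le_of_mul_le_mul_right (by linear_combination hab) hn)
    (le_of_mul_le_mul_right (by linear_combination hs) hn)
    (le_of_mul_le_mul_right (by linear_combination h₁) hn2)
    (le_of_mul_le_mul_right (by linear_combination h₂) hn2)
  linear_combination n ^ 2 * key

theorem le_sq_div_nine_of_counts {α a b n e s q : ℝ} (hα : 0 ≤ α) (hab₀ : 0 ≤ a + b)
    (hab : a + b ≤ n) (hE : (5 / 9 + α) * n ^ 2 ≤ e) (hdeg : e ≤ a * (n / 3) + (n - a) * n)
    (hsplit : e + s ≤ 2 * (a * (n / 3) + q + b * (α * n / 3)) + (n - (a + b)) ^ 2)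
    (hq : q ≤ a * b) (hqs : 2 * q ≤ s) (hs : s ≤ (a + b) ^ 2) :
    s ≤ n ^ 2 / 9 := by
  rcases le_or_gt (a + b) (n / 3) with hsmall | hlarge
  · calc s ≤ (a + b) ^ 2 := hs
      _ ≤ (n / 3) ^ 2 := pow_le_pow_left₀ hab₀ hsmall 2
      _ = n ^ 2 / 9 := by ring
  have hn : 0 < n := by linarith
  have := quadratic_bound hα hn hab hlarge.le (by linarith) (by linarith)
  linarith

namespace SimpleGraph

variable {V : Type*} (G : SimpleGraph V) [DecidableRel G.Adj]

theorem card_interedges_comm (s t : Finset V) : #(G.interedges s t) = #(G.interedges t s) :=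
  haveI : Std.Symm G.Adj := ⟨fun _ _ h ↦ h.symm⟩
  Rel.card_interedges_comm s t

theorem card_interedges_union_left [DecidableEq V] {s₁ s₂ : Finset V} (h : Disjoint s₁ s₂)
    (t : Finset V) :
    #(G.interedges (s₁ ∪ s₂) t) = #(G.interedges s₁ t) + #(G.interedges s₂ t) := by
  rw [← card_union_of_disjoint (G.interedges_disjoint_left h t)]
  congr 1
  ext
  simp only [mem_interedges_iff, mem_union]
  tauto

theorem card_interedges_union_right [DecidableEq V] (s : Finset V) {t₁ t₂ : Finset V}
    (h : Disjoint t₁ t₂) :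
    #(G.interedges s (t₁ ∪ t₂)) = #(G.interedges s t₁) + #(G.interedges s t₂) := by
  rw [G.card_interedges_comm, G.card_interedges_union_left h, G.card_interedges_comm t₁,
    G.card_interedges_comm t₂]

theorem card_interedges_eq_sum [Fintype V] [DecidableEq V] (s t : Finset V) :
    #(G.interedges s t) = ∑ v ∈ s, #(G.neighborFinset v ∩ t) := by
  rw [interedges, Rel.interedges, card_filter, sum_product]
  refine sum_congr rfl fun v _ ↦ ?_
  rw [← card_filter]
  congr 1
  ext
  simp [and_comm]

theorem card_interedges_le_card_mul [Fintype V] [DecidableEq V] {R : Type*} [Semiring R]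
    [PartialOrder R] [IsOrderedRing R] {s t : Finset V} {d : R}
    (h : ∀ v ∈ s, (#(G.neighborFinset v ∩ t) : R) ≤ d) :
    (#(G.interedges s t) : R) ≤ #s * d := by
  rw [card_interedges_eq_sum, Nat.cast_sum, ← nsmul_eq_mul]
  exact sum_le_card_nsmul _ _ _ h

theorem card_interedges_univ_univ [Fintype V] :
    #(G.interedges univ univ) = 2 * #G.edgeFinset := by
  rw [two_mul_card_edgeFinset]
  congr 1

theorem two_mul_card_edgeFinset_inter_sym2 [Fintype V] [DecidableEq V] (s : Finset V) :
    2 * #(G.edgeFinset ∩ s.sym2) = #(G.interedges s s) := by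
  classical
  let H := fromEdgeSet (G.edgeSet ∩ {e | ∀ v ∈ e, v ∈ s})
  have hI : H.interedges univ univ = G.interedges s s := by
    ext ⟨x, y⟩
    simp only [H, mk_mem_interedges_iff, fromEdgeSet_adj, mem_univ, true_and, Set.mem_inter_iff,
      mem_edgeSet, Set.mem_ofPred_eq, Sym2.forall_mem_pair]
    exact ⟨fun ⟨⟨h, hs⟩, _⟩ ↦ ⟨hs.1, hs.2, h⟩, fun ⟨hx, hy, h⟩ ↦ ⟨⟨h, hx, hy⟩, h.ne⟩⟩
  rw [← hI, H.card_interedges_univ_univ]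
  congr 2
  ext e
  simp only [H, mem_inter, mem_edgeFinset, edgeSet_fromEdgeSet, Set.mem_sdiff, Set.mem_inter_iff,
    Set.mem_ofPred_eq, mem_sym2_iff, Sym2.mem_diagSet]
  exact ⟨fun h ↦ ⟨h, G.not_isDiag_of_mem_edgeSet h.1⟩, And.left⟩

theorem card_interedges_univ_add_card_interedges_self [Fintype V] [DecidableEq V]
    (s : Finset V) :
    #(G.interedges univ univ) + #(G.interedges s s) =
      2 * #(G.interedges s univ) + #(G.interedges sᶜ sᶜ) := by
  have hs : Disjoint s sᶜ := disjoint_compl_right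
  have h₁ := G.card_interedges_union_left hs univ
  have h₂ := G.card_interedges_union_right s hs
  have h₃ := G.card_interedges_union_right sᶜ hs
  rw [union_compl] at h₁ h₂ h₃
  rw [G.card_interedges_comm sᶜ s] at h₃
  omega

theorem card_interedges_univ_add_card_interedges_union [Fintype V] [DecidableEq V]
    {s t : Finset V} (h : Disjoint s t) :
    #(G.interedges univ univ) + #(G.interedges (s ∪ t) (s ∪ t)) =
      2 * (#(G.interedges s univ) + #(G.interedges s t) + #(G.interedges t sᶜ)) +
        #(G.interedges (s ∪ t)ᶜ (s ∪ t)ᶜ) := by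
  have hs : Disjoint s sᶜ := disjoint_compl_right
  have ht := G.card_interedges_union_right t hs
  rw [union_compl, G.card_interedges_comm t s] at ht
  rw [G.card_interedges_univ_add_card_interedges_self, G.card_interedges_union_left h, ht,
    add_assoc]

theorem two_mul_card_interedges_le [DecidableEq V] {s t : Finset V} (h : Disjoint s t) :
    2 * #(G.interedges s t) ≤ #(G.interedges (s ∪ t) (s ∪ t)) := by
  rw [G.card_interedges_union_left h, two_mul]
  refine add_le_add (card_le_card (G.interedges_mono subset_rfl subset_union_right)) ?_
  rw [G.card_interedges_comm s t]
  exact card_le_card (G.interedges_mono subset_rfl subset_union_left)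

theorem two_mul_card_edgeFinset_le [Fintype V] [DecidableEq V] {s : Finset V} {d : ℝ}
    (hs : ∀ v ∈ s, (G.degree v : ℝ) ≤ d) :
    2 * (#G.edgeFinset : ℝ) ≤ #s * d + (Fintype.card V - #s) * Fintype.card V := by
  have hsc : (#sᶜ : ℝ) = Fintype.card V - #s := by
    rw [eq_sub_iff_add_eq]; exact_mod_cast card_compl_add_card s
  have hd : (#(G.interedges s univ) : ℝ) ≤ #s * d :=
    G.card_interedges_le_card_mul fun v hv ↦ by
      rw [inter_univ, card_neighborFinset_eq_degree]; exact hs v hv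
  have hdc : (#(G.interedges sᶜ univ) : ℝ) ≤ #sᶜ * Fintype.card V :=
    G.card_interedges_le_card_mul fun v _ ↦ by exact_mod_cast card_le_univ _
  have hsplit := G.card_interedges_union_left (disjoint_compl_right : Disjoint s sᶜ) univ
  rw [union_compl, card_interedges_univ_univ] at hsplit
  rify at hsplit
  rw [hsc] at hdc
  linarith

theorem two_mul_card_edgeFinset_add_card_interedges_le [Fintype V] [DecidableEq V]
    {s t : Finset V} (hst : Disjoint s t) {d d' : ℝ} (hs : ∀ v ∈ s, (G.degree v : ℝ) ≤ d)
    (ht : ∀ v ∈ t, (#(G.neighborFinset v \ s) : ℝ) ≤ d') :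
    2 * (#G.edgeFinset : ℝ) + #(G.interedges (s ∪ t) (s ∪ t)) ≤
      2 * (#s * d + #(G.interedges s t) + #t * d') + (Fintype.card V - (#s + #t)) ^ 2 := by
  have hu : (#(s ∪ t) : ℝ) = #s + #t := by exact_mod_cast card_union_of_disjoint hst
  have huc : (#(s ∪ t)ᶜ : ℝ) = Fintype.card V - (#s + #t) := by
    rw [eq_sub_iff_add_eq, ← hu]; exact_mod_cast card_compl_add_card (s ∪ t)
  have hd : (#(G.interedges s univ) : ℝ) ≤ #s * d :=
    G.card_interedges_le_card_mul fun v hv ↦ by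
      rw [inter_univ, card_neighborFinset_eq_degree]; exact hs v hv
  have hd' : (#(G.interedges t sᶜ) : ℝ) ≤ #t * d' :=
    G.card_interedges_le_card_mul fun v hv ↦ by rw [← sdiff_eq_inter_compl]; exact ht v hv
  have hc : (#(G.interedges (s ∪ t)ᶜ (s ∪ t)ᶜ) : ℝ) ≤ #(s ∪ t)ᶜ * #(s ∪ t)ᶜ := by
    exact_mod_cast G.card_interedges_le_mul _ _
  have hsplit := G.card_interedges_univ_add_card_interedges_union hst
  rw [card_interedges_univ_univ] at hsplit
  rify at hsplit
  rw [huc, ← sq] at hc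
  linarith

theorem card_edgeFinset_inter_sym2_le [Fintype V] [DecidableEq V] {α : ℝ} (hα : 0 ≤ α)
    (A B : Finset V) (hE : (5 / 9 + α) * (Fintype.card V : ℝ) ^ 2 ≤ 2 * #G.edgeFinset)
    (hA : ∀ v ∈ A, (G.degree v : ℝ) ≤ Fintype.card V / 3)
    (hB : ∀ v ∈ B, (#(G.neighborFinset v \ A) : ℝ) ≤ α * Fintype.card V / 3) :
    (#(G.edgeFinset ∩ (A ∪ B).sym2) : ℝ) ≤ Fintype.card V ^ 2 / 18 := by
  have hAB : Disjoint A (B \ A) := disjoint_sdiff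
  have hS : (#(A ∪ B \ A) : ℝ) = #A + #(B \ A) := by
    exact_mod_cast card_union_of_disjoint hAB
  have hq : (#(G.interedges A (B \ A)) : ℝ) ≤ #A * #(B \ A) := by
    exact_mod_cast G.card_interedges_le_mul A (B \ A)
  have hSS : (#(G.interedges (A ∪ B \ A) (A ∪ B \ A)) : ℝ) ≤ (#A + #(B \ A)) ^ 2 := by
    rw [sq, ← hS]; exact_mod_cast G.card_interedges_le_mul _ _
  have hqS := G.two_mul_card_interedges_le hAB
  have hE₂ := G.two_mul_card_edgeFinset_inter_sym2 (A ∪ B \ A)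
  rify at hqS hE₂
  have := le_sq_div_nine_of_counts hα (by positivity)
    (by rw [← hS]; exact_mod_cast card_le_univ _) hE (G.two_mul_card_edgeFinset_le hA)
    (G.two_mul_card_edgeFinset_add_card_interedges_le hAB hA fun v hv ↦ hB v (mem_sdiff.1 hv).1)
    hq hqS hSS
  rw [← union_sdiff_self_eq_union]
  linarith

end SimpleGraph

/-- Lemma 2.4: if `G` has at least `(5/9 + α) n² / 2` edges, `A` is the set of vertices of
degree less than `n/3` and `B` the set of vertices with at most `αn/3` neighbours outside `A`,
then at most `n²/18` edges of `G` have both endpoints in `A ∪ B`. -/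
theorem stmt0 {V : Type*} [Fintype V] (n : ℕ) (hn : Fintype.card V = n)
    (α : ℝ) (hα : 0 < α) (G : SimpleGraph V)
    (hE : (5 / 9 + α) * (n : ℝ) ^ 2 / 2 ≤ (G.edgeSet.ncard : ℝ))
    (A B : Set V)
    (hA : A = {x : V | ((G.neighborSet x).ncard : ℝ) < (n : ℝ) / 3})
    (hB : B = {x : V | (((G.neighborSet x) \ A).ncard : ℝ) ≤ α * (n : ℝ) / 3}) :
    (({e : Sym2 V | e ∈ G.edgeSet ∧ ∀ v ∈ e, v ∈ A ∪ B} : Set (Sym2 V)).ncard : ℝ)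
      ≤ (n : ℝ) ^ 2 / 18 := by
  classical
  subst hn
  have hS : {e : Sym2 V | e ∈ G.edgeSet ∧ ∀ v ∈ e, v ∈ A ∪ B} =
      ↑(G.edgeFinset ∩ (A.toFinset ∪ B.toFinset).sym2) := by
    ext
    simp only [Set.mem_ofPred_eq, coe_inter, Set.mem_inter_iff, SimpleGraph.coe_edgeFinset,
      mem_coe, mem_sym2_iff, mem_union, Set.mem_toFinset, Set.mem_union]
  rw [hS, Set.ncard_coe_finset]
  refine G.card_edgeFinset_inter_sym2_le hα.le _ _ ?_ (fun v hv ↦ ?_) (fun v hv ↦ ?_)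
  · rw [← SimpleGraph.coe_edgeFinset, Set.ncard_coe_finset] at hE
    linarith
  · rw [Set.mem_toFinset, hA] at hv
    rw [← G.card_neighborFinset_eq_degree, ← Set.ncard_coe_finset, G.coe_neighborFinset]
    exact hv.le
  · rw [Set.mem_toFinset, hB] at hv
    rwa [← Set.ncard_coe_finset, coe_sdiff, G.coe_neighborFinset, Set.coe_toFinset]
end

section
/- Let Ψ be a k-uniform constellation, X ⊆ V(Ψ) with |X| ≥ (|V(Ψ)| + k − 2)/2, and Ψ' = Ψ[X] the induced subconstellation. If a (k−1)-tuple of distinct vertices of Ψ' is (2ζ)-leftconnectable in Ψ', then it is ζ-leftconnectable in Ψ. -/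
open Finset

structure Constellation (V : Type*) [DecidableEq V] where
  verts : Finset V
  edges : Finset (Finset V)
  W : Finset V → Finset V

namespace Constellation

variable {V : Type*} [DecidableEq V]

/-- The link constellation `Ψ_S`. -/
def link (Ψ : Constellation V) (S : Finset V) : Constellation V where
  verts := Ψ.verts \ S
  edges := (Ψ.edges.filter fun e => S ⊆ e).image (· \ S)
  W := fun x => Ψ.W (x ∪ S) \ S

/-- The induced subconstellation `Ψ[X]`. -/
def induce (Ψ : Constellation V) (X : Finset V) : Constellation V where
  verts := Ψ.verts ∩ X
  edges := Ψ.edges.filter fun e => e ⊆ X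
  W := fun x => Ψ.W x ∩ X

/-- `Ψ - X`. -/
def remove (Ψ : Constellation V) (X : Finset V) : Constellation V :=
  Ψ.induce (Ψ.verts \ X)

end Constellation

/-- `Ψ` is a `k`-uniform constellation. -/
def IsUniformConst {V : Type*} [DecidableEq V] (k : ℕ) (Ψ : Constellation V) : Prop :=
  ∀ e ∈ Ψ.edges, e ⊆ Ψ.verts ∧ e.card = k

/-- `ζ`-leftconnectability of a `(k-1)`-tuple (as a list) in a `k`-uniform constellation. -/
def LeftConn {V : Type*} [DecidableEq V] : ℕ → Constellation V → ℝ → List V → Prop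
  | 0, _, _, _ => False
  | 1, _, _, _ => False
  | 2, Ψ, _, xs => xs.length = 1 ∧ ∀ v ∈ xs, v ∈ Ψ.W ∅
  | (k + 3), Ψ, ζ, xs =>
      xs.length = k + 2 ∧
      ζ * (Ψ.verts.card : ℝ) ≤
        (({z : V | z ∈ Ψ.verts ∧ insert z xs.toFinset ∈ Ψ.edges ∧
            LeftConn (k + 2) (Ψ.link {z}) ζ xs.tail} : Set V).ncard : ℝ)

def RightConn {V : Type*} [DecidableEq V] (k : ℕ) (Ψ : Constellation V) (ζ : ℝ)
    (xs : List V) : Prop :=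
  LeftConn k Ψ ζ xs.reverse

def Conn {V : Type*} [DecidableEq V] (k : ℕ) (Ψ : Constellation V) (ζ : ℝ)
    (xs : List V) : Prop :=
  LeftConn k Ψ ζ xs ∧ RightConn k Ψ ζ xs

/-- A `ζ`-bridge. -/
def IsBridge {V : Type*} [DecidableEq V] (k : ℕ) (Ψ : Constellation V) (ζ : ℝ)
    (x : Fin k → V) : Prop :=
  Finset.image x Finset.univ ∈ Ψ.edges ∧
  RightConn k Ψ ζ (List.ofFn x).dropLast ∧
  LeftConn k Ψ ζ (List.ofFn x).tail

/-- number of edges of the link graph of `x` crossing between `V(R_x)` and its complement. -/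
def crossCount {V : Type*} [DecidableEq V] (Ψ : Constellation V) (x : Finset V) : ℕ :=
  ((Ψ.link x).edges.filter fun p => (p ∩ Ψ.W x).Nonempty ∧ (p \ Ψ.W x).Nonempty).card

/-- `Ψ` is an `(α, μ)`-constellation. -/
def IsAMConst {V : Type*} [DecidableEq V] (k : ℕ) (Ψ : Constellation V) (α μ : ℝ) : Prop :=
  IsUniformConst k Ψ ∧
  ∀ x : Finset V, x ⊆ Ψ.verts → x.card = k - 2 →
    ((5 / 9 + α) * (Ψ.verts.card : ℝ) ^ 2 / 2 ≤
        ((Ψ.edges.filter fun e => x ⊆ e).card : ℝ)) ∧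
    Ψ.W x ⊆ Ψ.verts ∧
    ((2 / 3 + α / 2) * (Ψ.verts.card : ℝ) ≤ ((Ψ.W x).card : ℝ)) ∧
    ((crossCount Ψ x : ℝ) ≤ μ * (Ψ.verts.card : ℝ) ^ 2)

/-- number of `y`-`z`-paths of length `ℓ` in `R_x`. -/
noncomputable def pathCount {V : Type*} [DecidableEq V] (Ψ : Constellation V) (x : Finset V)
    (y z : V) (ℓ : ℕ) : ℕ :=
  ({ l : List V | l.length = ℓ + 1 ∧ l.Nodup ∧ (∀ v ∈ l, v ∈ Ψ.W x) ∧
      l.head? = some y ∧ l.getLast? = some z ∧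
      l.Chain' (fun u v => ({u, v} : Finset V) ∈ (Ψ.link x).edges) } : Set (List V)).ncard

/-- `Ψ` is an `(α, β, ℓ, μ)`-constellation. -/
def IsConst {V : Type*} [DecidableEq V] (k : ℕ) (Ψ : Constellation V)
    (α β : ℝ) (ℓ : ℕ) (μ : ℝ) : Prop :=
  IsAMConst k Ψ α μ ∧
  ∀ x : Finset V, x ⊆ Ψ.verts → x.card = k - 2 →
    ∀ y ∈ Ψ.W x, ∀ z ∈ Ψ.W x, y ≠ z →
      β * (Ψ.verts.card : ℝ) ^ (ℓ - 1) ≤ (pathCount Ψ x y z ℓ : ℝ)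

/-- `x` is a walk (of `m` vertices) in the `k`-uniform hypergraph with edge set `E`. -/
def IsWalk {V : Type*} [DecidableEq V] (E : Finset (Finset V)) (k m : ℕ)
    (x : Fin m → V) : Prop :=
  ∀ i : ℕ, ∀ h : i + k ≤ m,
    Finset.image (fun j : Fin k => x ⟨i + j.1, by have := j.2; omega⟩) Finset.univ ∈ E

/-- `l` is a path in the `k`-uniform hypergraph with edge set `E`. -/
def IsPathList {V : Type*} [DecidableEq V] (E : Finset (Finset V)) (k : ℕ)
    (l : List V) : Prop :=
  l.Nodup ∧ ∀ i : ℕ, i + k ≤ l.length → ((l.drop i).take k).toFinset ∈ E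

namespace Constellation

variable {V : Type*} [DecidableEq V]

theorem induce_verts_of_subset (Ψ : Constellation V) {X : Finset V} (hX : X ⊆ Ψ.verts) :
    (Ψ.induce X).verts = X :=
  inter_eq_right.mpr hX

theorem link_induce (Ψ : Constellation V) {X S : Finset V} (hS : S ⊆ X) :
    (Ψ.induce X).link S = (Ψ.link S).induce (X \ S) := by
  simp only [link, induce, mk.injEq]
  refine ⟨by ext v; simp only [mem_sdiff, mem_inter]; tauto, ?_, ?_⟩
  · ext e
    simp only [mem_image, mem_filter]
    constructor
    · rintro ⟨a, ⟨⟨haE, haX⟩, hSa⟩, rfl⟩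
      exact ⟨⟨a, ⟨haE, hSa⟩, rfl⟩, sdiff_subset_sdiff haX le_rfl⟩
    · rintro ⟨⟨a, ⟨haE, hSa⟩, rfl⟩, haX⟩
      refine ⟨a, ⟨⟨haE, fun v hv => ?_⟩, hSa⟩, rfl⟩
      by_cases hvS : v ∈ S
      · exact hS hvS
      · exact (mem_sdiff.mp (haX (mem_sdiff.mpr ⟨hv, hvS⟩))).1
  · funext x
    ext v
    simp only [mem_sdiff, mem_inter]
    tauto

end Constellation

open Constellation in
/-- Each level of the recursion deletes one vertex from both `Ψ` and `X`, which costs one unit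
of the slack `n`; at every level `|V(Ψ)| ≤ 2|X|` turns a `2ζ`-fraction of `X` into a
`ζ`-fraction of `V(Ψ)`. -/
theorem LeftConn.of_induce {V : Type*} [DecidableEq V] {ζ : ℝ} (hζ : 0 ≤ ζ) (n : ℕ) :
    ∀ (Ψ : Constellation V) (X : Finset V) (xs : List V), X ⊆ Ψ.verts →
      Ψ.verts.card + n ≤ 2 * X.card →
      LeftConn (n + 2) (Ψ.induce X) (2 * ζ) xs → LeftConn (n + 2) Ψ ζ xs := by
  induction n with
  | zero =>
    rintro Ψ X xs - - ⟨hlen, hW⟩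
    exact ⟨hlen, fun v hv => (mem_inter.mp (hW v hv)).1⟩
  | succ n ih =>
    rintro Ψ X xs hX hsize ⟨hlen, hcount⟩
    refine ⟨hlen, ?_⟩
    have hsub : {z | z ∈ (Ψ.induce X).verts ∧ insert z xs.toFinset ∈ (Ψ.induce X).edges ∧
          LeftConn (n + 2) ((Ψ.induce X).link {z}) (2 * ζ) xs.tail} ⊆
        {z | z ∈ Ψ.verts ∧ insert z xs.toFinset ∈ Ψ.edges ∧
          LeftConn (n + 2) (Ψ.link {z}) ζ xs.tail} := by
      rintro z ⟨hz, he, hconn⟩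
      obtain ⟨hzV, hzX⟩ := mem_inter.mp hz
      refine ⟨hzV, (mem_filter.mp he).1, ?_⟩
      rw [link_induce Ψ (singleton_subset_iff.mpr hzX)] at hconn
      refine ih (Ψ.link {z}) (X \ {z}) xs.tail (sdiff_subset_sdiff hX le_rfl) ?_ hconn
      have hV := card_sdiff_of_subset (singleton_subset_iff.mpr hzV)
      have hX' := card_sdiff_of_subset (singleton_subset_iff.mpr hzX)
      have hVpos := card_pos.mpr ⟨z, hzV⟩
      simp only [link, card_singleton] at hV hX' ⊢
      omega
    have hsizeℝ : (Ψ.verts.card : ℝ) ≤ 2 * (Ψ.induce X).verts.card := by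
      rw [induce_verts_of_subset Ψ hX]
      exact_mod_cast (Nat.le_add_right _ _).trans hsize
    calc ζ * (Ψ.verts.card : ℝ)
        ≤ 2 * ζ * (Ψ.induce X).verts.card := by nlinarith
      _ ≤ _ := hcount
      _ ≤ _ := by
        exact_mod_cast Set.ncard_le_ncard hsub (Ψ.verts.finite_toSet.subset fun z hz => hz.1)

theorem stmt6_general {V : Type*} [DecidableEq V] (k : ℕ)
    (ζ : ℝ) (hζ : 0 < ζ)
    (Ψ : Constellation V)
    (X : Finset V) (hX : X ⊆ Ψ.verts)
    (hsize : ((Ψ.verts.card : ℝ) + (k : ℝ) - 2) / 2 ≤ (X.card : ℝ))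
    (xs : List V)
    (h : LeftConn k (Ψ.induce X) (2 * ζ) xs) : LeftConn k Ψ ζ xs := by
  obtain _ | _ | n := k
  · exact h.elim
  · exact h.elim
  refine LeftConn.of_induce hζ.le n Ψ X xs hX ?_ h
  push_cast at hsize
  exact_mod_cast (by linarith : (Ψ.verts.card : ℝ) + n ≤ 2 * X.card)

/-- Fact 2.13: if `Ψ' = Ψ[X]` with `|X| ≥ (|V(Ψ)| + k - 2)/2`, then every `(2ζ)`-leftconnectable
`(k-1)`-tuple of distinct vertices of `Ψ'` is `ζ`-leftconnectable in `Ψ`. -/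
theorem stmt6 {V : Type*} [Fintype V] [DecidableEq V] (k : ℕ) (hk : 2 ≤ k)
    (ζ : ℝ) (hζ : 0 < ζ)
    (Ψ : Constellation V) (hΨ : IsUniformConst k Ψ)
    (X : Finset V) (hX : X ⊆ Ψ.verts)
    (hsize : ((Ψ.verts.card : ℝ) + (k : ℝ) - 2) / 2 ≤ (X.card : ℝ))
    (xs : List V) (hlen : xs.length = k - 1) (hnd : xs.Nodup)
    (hmem : ∀ v ∈ xs, v ∈ (Ψ.induce X).verts)
    (h : LeftConn k (Ψ.induce X) (2 * ζ) xs) : LeftConn k Ψ ζ xs :=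
  stmt6_general k ζ hζ Ψ X hX hsize xs h
end

section
/- Let k ≥ 2, ζ > 0, and let Ψ be a k-uniform constellation on vertex set V(Ψ). Then the number of k-tuples (x₁,…,x_k) ∈ V(Ψ)^k such that {x₁,…,x_k} is an edge of Ψ, x_k is a vertex of the distinguished graph R^Ψ_{x₁…x_{k−2}}, and (x₂,…,x_k) fails to be ζ-leftconnectable in Ψ, is at most (k−2)·ζ·|V(Ψ)|^k. -/
/-!
Induction on `k`, the case `k = 2` being empty because `(x₂)` is leftconnectable exactly when
`x₂ ∈ R_∅`. For `k ≥ 3` split a counted tuple `(x₁, …, x_k)` according to whether `(x₃, …, x_k)`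
is `ζ`-leftconnectable in the link `Ψ_{x₁}`. If it is, `x₁` is one of the vertices witnessing
the leftconnectability of `(x₂, …, x_k)`; as that fails, there are fewer than `ζ|V|` of them, so
these tuples number at most `|V|^(k-1) · ζ|V|`. If it is not, `(x₂, …, x_k)` is a counted tuple
of the `(k-1)`-uniform constellation `Ψ_{x₁}`, and the induction hypothesis bounds these by
`|V| · (k-3)ζ|V|^(k-1)`.
-/

open Finset

theorem Fin.eq_of_zero_eq_of_tail_eq {α : Type*} {n : ℕ} {a b : Fin (n + 1) → α}
    (h0 : a 0 = b 0) (htail : Fin.tail a = Fin.tail b) : a = b := by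
  rw [← Fin.cons_self_tail a, ← Fin.cons_self_tail b, h0, htail]

theorem Finset.image_univ_fin_succ {α : Type*} [DecidableEq α] {n : ℕ} (f : Fin (n + 1) → α) :
    univ.image f = insert (f 0) (univ.image (Fin.tail f)) := by
  ext a
  simp only [mem_image, mem_univ, true_and, mem_insert, Fin.exists_fin_succ, eq_comm (a := a)]
  rfl

theorem Finset.card_le_card_mul_of_card_fiber_le {α β : Type*} [DecidableEq β] {s : Finset α}
    {t : Finset β} {f : α → β} (hf : Set.MapsTo f s t) {b : ℝ}
    (hb : ∀ y ∈ t, (#{a ∈ s | f a = y} : ℝ) ≤ b) : (#s : ℝ) ≤ #t * b := by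
  rw [card_eq_sum_card_fiberwise hf]
  push_cast
  simpa using sum_le_card_nsmul t _ b hb

section

variable {V : Type*} [DecidableEq V] {Ψ : Constellation V}

theorem IsUniformConst.link {k : ℕ} {S : Finset V} (hΨ : IsUniformConst (k + #S) Ψ) :
    IsUniformConst k (Ψ.link S) := by
  intro e' he'
  obtain ⟨e, ⟨he, hSe⟩, rfl⟩ := by simpa [Constellation.link] using he'
  obtain ⟨heV, hek⟩ := hΨ e he
  exact ⟨sdiff_subset_sdiff heV le_rfl, by rw [card_sdiff_of_subset hSe, hek]; omega⟩

theorem IsUniformConst.link_singleton {k : ℕ} (hΨ : IsUniformConst (k + 1) Ψ) (z : V) :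
    IsUniformConst k (Ψ.link {z}) :=
  IsUniformConst.link (by rwa [card_singleton])

theorem IsUniformConst.injective_of_image_mem {m : ℕ} (hΨ : IsUniformConst m Ψ)
    {x : Fin m → V} (hx : univ.image x ∈ Ψ.edges) : Function.Injective x := by
  have hinj : Set.InjOn x (univ : Finset (Fin m)) :=
    card_image_iff.mp (by rw [(hΨ _ hx).2, card_univ, Fintype.card_fin])
  exact fun a b hab => hinj (mem_univ a) (mem_univ b) hab

open Classical in
-- Indexed by `m = k - 2`, which keeps truncated subtraction out of the tuple lengths.
noncomputable def badTuples (m : ℕ) (ζ : ℝ) (Ψ : Constellation V) : Finset (Fin (m + 2) → V) :=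
  (Fintype.piFinset fun _ => Ψ.verts).filter fun x =>
    univ.image x ∈ Ψ.edges ∧
    x (Fin.last (m + 1)) ∈ Ψ.W (univ.image fun j : Fin m => x (Fin.castAdd 2 j)) ∧
    ¬ LeftConn (m + 2) Ψ ζ (List.ofFn (Fin.tail x))

theorem mem_badTuples {m : ℕ} {ζ : ℝ} {x : Fin (m + 2) → V} :
    x ∈ badTuples m ζ Ψ ↔ (∀ i, x i ∈ Ψ.verts) ∧ univ.image x ∈ Ψ.edges ∧
      x (Fin.last (m + 1)) ∈ Ψ.W (univ.image fun j : Fin m => x (Fin.castAdd 2 j)) ∧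
      ¬ LeftConn (m + 2) Ψ ζ (List.ofFn (Fin.tail x)) := by
  simp [badTuples]

theorem badTuples_zero (ζ : ℝ) (Ψ : Constellation V) : badTuples 0 ζ Ψ = ∅ := by
  refine eq_empty_of_forall_notMem fun x hx => ?_
  obtain ⟨-, -, hW, hconn⟩ := mem_badTuples.mp hx
  refine hconn ⟨by simp, ?_⟩
  simpa [List.ofFn_succ, Fin.tail] using hW

theorem tail_mem_badTuples_link {m : ℕ} {ζ : ℝ} (hΨ : IsUniformConst (m + 3) Ψ)
    {x : Fin (m + 3) → V} (hx : x ∈ badTuples (m + 1) ζ Ψ)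
    (hconn : ¬ LeftConn (m + 2) (Ψ.link {x 0}) ζ (List.ofFn (Fin.tail (Fin.tail x)))) :
    Fin.tail x ∈ badTuples m ζ (Ψ.link {x 0}) := by
  obtain ⟨hV, hE, hW, -⟩ := mem_badTuples.mp hx
  have hinj := hΨ.injective_of_image_mem hE
  have hx0 : ∀ i, x (Fin.succ i) ≠ x 0 := fun i h => Fin.succ_ne_zero i (hinj h)
  have hx0_notMem : x 0 ∉ univ.image (Fin.tail x) := by simpa [Fin.tail] using hx0
  refine mem_badTuples.mpr ⟨fun i => ?_, ?_, ?_, hconn⟩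
  · simpa [Constellation.link] using ⟨hV _, hx0 i⟩
  · simp only [Constellation.link, mem_image, mem_filter]
    refine ⟨univ.image x, ⟨hE, by simp⟩, ?_⟩
    rw [image_univ_fin_succ, sdiff_singleton_eq_erase, erase_insert hx0_notMem]
  · have hinit : univ.image (fun j : Fin (m + 1) => x (Fin.castAdd 2 j)) =
        univ.image (fun j : Fin m => Fin.tail x (Fin.castAdd 2 j)) ∪ {x 0} := by
      rw [image_univ_fin_succ, union_comm, ← insert_eq]
      rfl
    simp only [Constellation.link, mem_sdiff, mem_singleton, ← hinit]
    exact ⟨hW, hx0 _⟩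

section Counting

open Classical

variable {m : ℕ} {ζ : ℝ}

theorem card_badTuples_filter_leftConn_link_le (hζ : 0 ≤ ζ) :
    (#{x ∈ badTuples (m + 1) ζ Ψ |
        LeftConn (m + 2) (Ψ.link {x 0}) ζ (List.ofFn (Fin.tail (Fin.tail x)))} : ℝ) ≤
      #Ψ.verts ^ (m + 2) * (ζ * #Ψ.verts) := by
  set A := {x ∈ badTuples (m + 1) ζ Ψ |
    LeftConn (m + 2) (Ψ.link {x 0}) ζ (List.ofFn (Fin.tail (Fin.tail x)))}
  have hmaps : Set.MapsTo (Fin.tail (n := m + 2) (α := fun _ => V)) A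
      (Fintype.piFinset fun _ : Fin (m + 2) => Ψ.verts) := by
    intro x hx
    simpa [Fin.tail] using fun i : Fin (m + 2) => (mem_badTuples.mp (mem_filter.mp hx).1).1 i.succ
  refine (card_le_card_mul_of_card_fiber_le (b := ζ * #Ψ.verts) hmaps fun t _ => ?_).trans_eq
    (by simp)
  obtain hempty | ⟨x, hx⟩ := {a ∈ A | Fin.tail a = t}.eq_empty_or_nonempty
  · simpa [hempty] using mul_nonneg hζ (Nat.cast_nonneg _)
  -- `a ↦ a 0` injects the fibre over `t` into the witnesses `Z` of leftconnectability of `t`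
  set Z : Set V := {z | z ∈ Ψ.verts ∧ insert z (List.ofFn t).toFinset ∈ Ψ.edges ∧
    LeftConn (m + 2) (Ψ.link {z}) ζ (List.ofFn t).tail}
  have hZ : (Z.ncard : ℝ) < ζ * #Ψ.verts := by
    obtain ⟨hxA, rfl⟩ := mem_filter.mp hx
    have hconn := (mem_badTuples.mp (mem_filter.mp hxA).1).2.2.2
    exact lt_of_not_ge fun h => hconn ⟨by simp, h⟩
  have hfiber : #{a ∈ A | Fin.tail a = t} ≤ Z.ncard := by
    rw [← Set.ncard_coe_finset]
    refine Set.ncard_le_ncard_of_injOn (· 0) (fun a ha => ?_) (fun a ha b hb h0 => ?_)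
      ((Ψ.verts.finite_toSet).subset fun z hz => hz.1)
    · obtain ⟨haA, rfl⟩ := mem_filter.mp ha
      obtain ⟨haB, hconn⟩ := mem_filter.mp haA
      obtain ⟨hV, hE, -⟩ := mem_badTuples.mp haB
      refine ⟨hV 0, ?_, by rw [List.ofFn_succ, List.tail_cons]; exact hconn⟩
      rwa [← Fin.univ_image_def, ← image_univ_fin_succ]
    · exact Fin.eq_of_zero_eq_of_tail_eq h0 ((mem_filter.mp ha).2.trans (mem_filter.mp hb).2.symm)
  exact (Nat.cast_le.mpr hfiber).trans hZ.le

theorem card_badTuples_filter_not_leftConn_link_le (hΨ : IsUniformConst (m + 3) Ψ) {b : ℝ}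
    (hlink : ∀ z ∈ Ψ.verts, (#(badTuples m ζ (Ψ.link {z})) : ℝ) ≤ b) :
    (#{x ∈ badTuples (m + 1) ζ Ψ |
        ¬ LeftConn (m + 2) (Ψ.link {x 0}) ζ (List.ofFn (Fin.tail (Fin.tail x)))} : ℝ) ≤
      #Ψ.verts * b := by
  set C := {x ∈ badTuples (m + 1) ζ Ψ |
    ¬ LeftConn (m + 2) (Ψ.link {x 0}) ζ (List.ofFn (Fin.tail (Fin.tail x)))}
  have hmaps : Set.MapsTo (fun x : Fin (m + 3) → V => x 0) C Ψ.verts :=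
    fun x hx => (mem_badTuples.mp (mem_filter.mp hx).1).1 0
  refine card_le_card_mul_of_card_fiber_le hmaps fun z hz => (Nat.cast_le.mpr ?_).trans (hlink z hz)
  refine card_le_card_of_injOn Fin.tail (fun x hx => ?_) (fun x hx y hy htail => ?_)
  · obtain ⟨hxC, rfl⟩ := mem_filter.mp hx
    exact tail_mem_badTuples_link hΨ (mem_filter.mp hxC).1 (mem_filter.mp hxC).2
  · exact Fin.eq_of_zero_eq_of_tail_eq ((mem_filter.mp hx).2.trans (mem_filter.mp hy).2.symm) htail

theorem card_badTuples_le (hζ : 0 ≤ ζ) (hΨ : IsUniformConst (m + 2) Ψ) :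
    (#(badTuples m ζ Ψ) : ℝ) ≤ m * ζ * #Ψ.verts ^ (m + 2) := by
  induction m generalizing Ψ with
  | zero => simp [badTuples_zero]
  | succ m ih =>
    have hlink (z : V) (_ : z ∈ Ψ.verts) :
        (#(badTuples m ζ (Ψ.link {z})) : ℝ) ≤ m * ζ * #Ψ.verts ^ (m + 2) :=
      (ih (hΨ.link_singleton z)).trans (by gcongr; exact sdiff_subset)
    rw [← card_filter_add_card_filter_not
      fun x => LeftConn (m + 2) (Ψ.link {x 0}) ζ (List.ofFn (Fin.tail (Fin.tail x)))]
    calc (_ : ℝ)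
        ≤ #Ψ.verts ^ (m + 2) * (ζ * #Ψ.verts) + #Ψ.verts * (m * ζ * #Ψ.verts ^ (m + 2)) := by
          push_cast
          exact add_le_add (card_badTuples_filter_leftConn_link_le hζ)
            (card_badTuples_filter_not_leftConn_link_le hΨ hlink)
      _ = ((m + 1 : ℕ) : ℝ) * ζ * #Ψ.verts ^ (m + 1 + 2) := by push_cast; ring

end Counting

end

/-- Lemma 2.14: in a `k`-uniform constellation `Ψ` there are at most `(k-2) ζ |V(Ψ)|^k`
tuples `(x₁,…,x_k) ∈ V(Ψ)^k` such that `{x₁,…,x_k} ∈ E(Ψ)`, `x_k ∈ V(R_{x₁…x_{k-2}})`, and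
`(x₂,…,x_k)` fails to be `ζ`-leftconnectable in `Ψ`. -/
theorem stmt7 {V : Type*} [DecidableEq V] (k : ℕ) (hk : 2 ≤ k)
    (ζ : ℝ) (hζ : 0 < ζ)
    (Ψ : Constellation V) (hΨ : IsUniformConst k Ψ) :
    (({x : Fin k → V | (∀ i, x i ∈ Ψ.verts) ∧
        Finset.image x Finset.univ ∈ Ψ.edges ∧
        x ⟨k - 1, by omega⟩ ∈
          Ψ.W (Finset.image (fun j : Fin (k - 2) => x ⟨j.1, by have := j.2; omega⟩)
            Finset.univ) ∧
        ¬ LeftConn k Ψ ζ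
          (List.ofFn (fun j : Fin (k - 1) => x ⟨j.1 + 1, by have := j.2; omega⟩))} :
      Set (Fin k → V)).ncard : ℝ) ≤
      ((k : ℝ) - 2) * ζ * (Ψ.verts.card : ℝ) ^ k := by
  obtain ⟨m, rfl⟩ : ∃ m, k = m + 2 := ⟨k - 2, by omega⟩
  convert card_badTuples_le hζ.le hΨ using 1
  · rw [← Set.ncard_coe_finset]
    congr 2
    ext x
    exact mem_badTuples.symm
  · push_cast
    ring
end

section
/- Let k ≥ 2, ζ > 0, and let Ψ be a k-uniform constellation. Then the number of walks x₁…x_{2k−3} in the underlying hypergraph H(Ψ) such that x_{k−1} ∈ V(R^Ψ_{x_k…x_{2k−3}}) but (x₁,…,x_{k−1}) fails to be ζ-leftconnectable in Ψ is at most (k−2)·ζ·|V(Ψ)|^{2k−3}. -/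
open Finset

/-!
Index the walk from `0`, as `x 0, …, x (2k-4)`. At level `j ≤ k-2` the vertices
`x (k-1), …, x (k-2+j)` are moved one by one into the link, and one asks whether
`(x j, …, x (k-2))` is leftconnectable there. Level `0` is the leftconnectability in the
theorem, and level `k-2` is exactly the hypothesis `x (k-2) ∈ V(R_{x (k-1) … x (2k-4)})`
(the walk's edges make these vertices distinct). So a bad walk has a level `j < k-2` that fails
while level `j+1` holds. Then `x (k-1+j)` lies in the set of extensions witnessing level `j`
(the edge is `x j, …, x (k-1+j)`), and since level `j` fails this set has fewer than
`ζ |V(Ψ)|` elements. The set does not depend on `x (k-1+j)`, so for each level at most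
`ζ |V(Ψ)| · |V(Ψ)|^{2k-4}` walks are bad.
-/

namespace List

variable {V : Type*} [DecidableEq V]

lemma toFinset_concat (s : List V) (a : V) : (s ++ [a]).toFinset = s.toFinset ∪ {a} := by
  simp

lemma nodup_of_card_toFinset_eq_length {l : List V} (h : #l.toFinset = l.length) : l.Nodup :=
  Multiset.coe_nodup.1 (Multiset.toFinset_card_eq_card_iff_nodup.1 h)

end List

namespace Constellation

variable {V : Type*} [DecidableEq V]

def linkList (Ψ : Constellation V) (s : List V) : Constellation V :=
  s.foldl (fun Ψ a => Ψ.link {a}) Ψ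

lemma linkList_concat (Ψ : Constellation V) (s : List V) (a : V) :
    Ψ.linkList (s ++ [a]) = (Ψ.linkList s).link {a} :=
  List.foldl_concat ..

lemma verts_linkList (Ψ : Constellation V) (s : List V) :
    (Ψ.linkList s).verts = Ψ.verts \ s.toFinset := by
  induction s using List.reverseRecOn with
  | nil => simp [linkList]
  | append_singleton s a ih =>
    rw [linkList_concat, List.toFinset_concat, ← sup_eq_union, ← sdiff_sdiff_left, ← ih]
    rfl

lemma W_linkList (Ψ : Constellation V) (s : List V) (t : Finset V) :
    (Ψ.linkList s).W t = Ψ.W (t ∪ s.toFinset) \ s.toFinset := by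
  induction s using List.reverseRecOn generalizing t with
  | nil => simp [linkList]
  | append_singleton s a ih =>
    rw [linkList_concat, List.toFinset_concat, ← union_assoc, union_right_comm,
      ← sup_eq_union (s := s.toFinset), ← sdiff_sdiff_left, ← ih]
    rfl

lemma sdiff_mem_edges_linkList (Ψ : Constellation V) {s : List V} (hs : s.Nodup)
    {e : Finset V} (he : e ∈ Ψ.edges) (hse : s.toFinset ⊆ e) :
    e \ s.toFinset ∈ (Ψ.linkList s).edges := by
  induction s using List.reverseRecOn with
  | nil => simpa [linkList] using he
  | append_singleton s a ih =>
    rw [List.nodup_append] at hs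
    rw [List.toFinset_concat, union_subset_iff, singleton_subset_iff] at hse
    rw [linkList_concat]
    refine mem_image.2 ⟨e \ s.toFinset, mem_filter.2 ⟨ih hs.1 hse.1, ?_⟩, ?_⟩
    · simpa [hse.2] using fun has => hs.2.2 a has a (List.mem_singleton_self a) rfl
    · rw [List.toFinset_concat, ← sup_eq_union, sdiff_sdiff_left]

def extensionSet (Ψ : Constellation V) (ζ : ℝ) (xs : List V) : Set V :=
  {z | z ∈ Ψ.verts ∧ insert z xs.toFinset ∈ Ψ.edges ∧ LeftConn xs.length (Ψ.link {z}) ζ xs.tail}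

lemma extensionSet_finite (Ψ : Constellation V) (ζ : ℝ) (xs : List V) :
    (Ψ.extensionSet ζ xs).Finite :=
  Ψ.verts.finite_toSet.subset fun _ hz => hz.1

lemma leftConn_iff_le_ncard_extensionSet {n : ℕ} (Ψ : Constellation V) (ζ : ℝ) {xs : List V}
    (h : xs.length = n + 2) :
    LeftConn (n + 3) Ψ ζ xs ↔ ζ * Ψ.verts.card ≤ (Ψ.extensionSet ζ xs).ncard := by
  rw [LeftConn, extensionSet, h]
  exact and_iff_right rfl

lemma leftConn_two_linkList_iff (Ψ : Constellation V) (ζ : ℝ) (s : List V) (v : V) :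
    LeftConn 2 (Ψ.linkList s) ζ [v] ↔ v ∈ Ψ.W s.toFinset ∧ v ∉ s := by
  simp [LeftConn, W_linkList]

lemma mem_extensionSet_linkList (Ψ : Constellation V) (ζ : ℝ) {t s : List V} {z : V}
    (hnd : (t ++ s ++ [z]).Nodup) (he : (t ++ s ++ [z]).toFinset ∈ Ψ.edges) (hz : z ∈ Ψ.verts)
    (hconn : LeftConn t.length (Ψ.linkList (s ++ [z])) ζ t.tail) :
    z ∈ (Ψ.linkList s).extensionSet ζ t := by
  simp only [List.nodup_append, List.nodup_cons, List.mem_append, List.mem_singleton] at hnd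
  refine ⟨?_, ?_, by rwa [← linkList_concat]⟩
  · rw [verts_linkList]
    simpa [hz] using fun hzs => hnd.2.2 z (Or.inr hzs) z rfl rfl
  · have hsub : s.toFinset ⊆ (t ++ s ++ [z]).toFinset := by
      intro v; simp +contextual
    convert Ψ.sdiff_mem_edges_linkList hnd.1.2.1 he hsub using 1
    ext v
    simp only [mem_insert, List.mem_toFinset, mem_sdiff, List.mem_append, List.mem_singleton]
    grind

end Constellation

section Window

variable {V : Type*} {m : ℕ}

def window (x : Fin m → V) (a b : ℕ) : List V :=
  ((List.ofFn x).drop a).take b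

lemma length_window (x : Fin m → V) {a b : ℕ} (h : a + b ≤ m) : (window x a b).length = b := by
  simp [window]; omega

lemma window_append (x : Fin m → V) {a b a' c n : ℕ} (ha : a + b = a') (hn : b + c = n) :
    window x a b ++ window x a' c = window x a n := by
  subst ha hn
  simp [window, List.take_add]

lemma window_one (x : Fin m → V) {a : ℕ} (h : a < m) : window x a 1 = [x ⟨a, h⟩] := by
  simp [window, List.take_one, h]

lemma tail_window (x : Fin m → V) (a b : ℕ) : (window x a (b + 1)).tail = window x (a + 1) b := by
  simp [window, List.tail_take_eq_take_tail, List.tail_drop]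

lemma ofFn_eq_window (x : Fin m → V) {a b : ℕ} (h : a + b ≤ m) :
    List.ofFn (fun j : Fin b => x ⟨a + j, by omega⟩) = window x a b := by
  apply List.ext_getElem
  · rw [length_window x h, List.length_ofFn]
  · intro i _ _
    simp [window]

lemma ofFn_eq_window_zero (x : Fin m → V) {b : ℕ} (h : b ≤ m) :
    List.ofFn (fun j : Fin b => x ⟨j, by omega⟩) = window x 0 b := by
  simpa using ofFn_eq_window x (a := 0) (b := b) (by omega)

lemma window_congr {x y : Fin m → V} {a b : ℕ}
    (hxy : ∀ i : Fin m, a ≤ i → i < a + b → x i = y i) : window x a b = window y a b := by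
  apply List.ext_getElem
  · simp [window]
  · intro i hi _
    simp only [window, List.length_take, List.length_drop, List.length_ofFn] at hi
    simp only [window, List.getElem_take, List.getElem_drop, List.getElem_ofFn]
    exact hxy _ (by simp) (by simp; omega)

lemma window_sublist (x : Fin m → V) {a b a' b' : ℕ} (ha : a ≤ a') (hb : a' + b' ≤ a + b) :
    (window x a' b').Sublist (window x a b) := by
  rw [← window_append x (b := a' - a) (a' := a') (c := b' + (a + b - a' - b')) (n := b)
      (by omega) (by omega),
    ← window_append x (a := a') (b := b') rfl rfl]
  exact (List.sublist_append_left _ _).trans (List.sublist_append_right _ _)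

end Window

section Walk

variable {V : Type*} [DecidableEq V] {E : Finset (Finset V)} {k m : ℕ} {x : Fin m → V}

lemma image_univ_eq_toFinset_window (x : Fin m → V) {a b : ℕ} (h : a + b ≤ m) :
    image (fun j : Fin b => x ⟨a + j, by omega⟩) univ = (window x a b).toFinset := by
  rw [Fin.univ_image_def, ofFn_eq_window x h]

lemma IsWalk.toFinset_window_mem (hw : IsWalk E k m x) {i : ℕ} (h : i + k ≤ m) :
    (window x i k).toFinset ∈ E := by
  simpa only [image_univ_eq_toFinset_window x h] using hw i h

lemma IsWalk.nodup_window (hw : IsWalk E k m x) (hE : ∀ e ∈ E, #e = k) {i a b : ℕ}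
    (hi : i + k ≤ m) (hia : i ≤ a) (hab : a + b ≤ i + k) : (window x a b).Nodup := by
  refine (window_sublist x hia hab).nodup (List.nodup_of_card_toFinset_eq_length ?_)
  rw [hE _ (hw.toFinset_window_mem hi), length_window x hi]

end Walk

lemma ncard_le_of_coord_mem {V : Type*} {m : ℕ} (c : Fin m) (A : Finset V)
    (B : (Fin m → V) → Set V) (n : ℕ) (hfin : ∀ x, (B x).Finite)
    (hB : ∀ x y, (∀ i, i ≠ c → x i = y i) → B x = B y) :
    {x : Fin m → V | (∀ i, x i ∈ A) ∧ x c ∈ B x ∧ (B x).ncard ≤ n}.ncard ≤ n * #A ^ (m - 1) := by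
  classical
  set T := {x : Fin m → V | (∀ i, x i ∈ A) ∧ x c ∈ B x ∧ (B x).ncard ≤ n}
  have hT : T.Finite :=
    (Set.Finite.pi fun _ => A.finite_toSet).subset fun x hx i _ => hx.1 i
  let restrict : (Fin m → V) → ({i // i ≠ c} → V) := fun x i => x i
  have hfiber : ∀ y, #{x ∈ hT.toFinset | restrict x = y} ≤ n := by
    intro y
    rcases eq_empty_or_nonempty {x ∈ hT.toFinset | restrict x = y} with h | ⟨x₀, hx₀⟩
    · simp [h]
    obtain ⟨hx₀T, rfl⟩ := mem_filter.1 hx₀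
    have hx₀T : x₀ ∈ T := hT.mem_toFinset.1 hx₀T
    rw [← Set.ncard_coe_finset]
    refine (Set.ncard_le_ncard_of_injOn (fun x => x c) ?_ ?_ (hfin x₀)).trans hx₀T.2.2
    · intro x hx
      obtain ⟨hxT, hxy⟩ := mem_filter.1 hx
      rw [hB x₀ x fun i hi => (congrFun hxy ⟨i, hi⟩).symm]
      exact (hT.mem_toFinset.1 hxT).2.1
    · intro x hx x' hx' h
      funext i
      by_cases hi : i = c
      · exact hi ▸ h
      · exact congrFun ((mem_filter.1 hx).2.trans (mem_filter.1 hx').2.symm) ⟨i, hi⟩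
  rw [Set.ncard_eq_toFinset_card T hT]
  calc #hT.toFinset ≤ n * #(Fintype.piFinset fun _ : {i // i ≠ c} => A) :=
        card_le_mul_card_image_of_maps_to (f := restrict)
          (fun x hx => Fintype.mem_piFinset.2 fun i => (hT.mem_toFinset.1 hx).1 i) n
          (fun y _ => hfiber y)
    _ = n * #A ^ (m - 1) := by simp [Fintype.card_subtype_compl]

section Levels

variable {V : Type*} [DecidableEq V] (Ψ : Constellation V) (ζ : ℝ) (k : ℕ)
  (x : Fin (2 * k - 3) → V)

def LevelLeftConn (j : ℕ) : Prop :=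
  LeftConn (k - j) (Ψ.linkList (window x (k - 1) j)) ζ (window x j (k - 1 - j))

def levelExtensionSet (j : ℕ) : Set V :=
  (Ψ.linkList (window x (k - 1) j)).extensionSet ζ (window x j (k - 1 - j))

def badLevelSet (j : Fin (k - 2)) : Set (Fin (2 * k - 3) → V) :=
  {x | (∀ i, x i ∈ Ψ.verts) ∧ x ⟨k - 1 + j, by omega⟩ ∈ levelExtensionSet Ψ ζ k x j ∧
    (levelExtensionSet Ψ ζ k x j).ncard ≤ ⌊ζ * #Ψ.verts⌋₊}

variable {Ψ ζ k x}

lemma levelLeftConn_last (hk : 2 ≤ k) (hΨ : ∀ e ∈ Ψ.edges, #e = k)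
    (hw : IsWalk Ψ.edges k (2 * k - 3) x)
    (hW : ∀ v ∈ window x (k - 2) 1, v ∈ Ψ.W (window x (k - 1) (k - 2)).toFinset) :
    LevelLeftConn Ψ ζ k x (k - 2) := by
  rw [window_one x (by omega), List.forall_mem_singleton] at hW
  have hsplit : window x (k - 2) (k - 1) = [x ⟨k - 2, by omega⟩] ++ window x (k - 1) (k - 2) := by
    rw [← window_one x (by omega), window_append x (n := k - 1) (by omega) (by omega)]
  have hnd : (window x (k - 2) (k - 1)).Nodup := by
    obtain rfl | hk3 := hk.eq_or_lt
    · simp [window_one x (show 0 < 2 * 2 - 3 by omega)]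
    · exact hw.nodup_window hΨ (i := k - 3) (by omega) (by omega) (by omega)
  rw [hsplit, List.nodup_append] at hnd
  rw [LevelLeftConn, show k - (k - 2) = 2 by omega, show k - 1 - (k - 2) = 1 by omega,
    window_one x (by omega), Constellation.leftConn_two_linkList_iff]
  exact ⟨hW, fun h => hnd.2.2 _ (List.mem_singleton_self _) _ h rfl⟩

lemma mem_levelExtensionSet (hΨ : ∀ e ∈ Ψ.edges, #e = k)
    (hw : IsWalk Ψ.edges k (2 * k - 3) x) (hx : ∀ i, x i ∈ Ψ.verts) {j : ℕ} (hj : j + 3 ≤ k)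
    (hconn : LevelLeftConn Ψ ζ k x (j + 1)) :
    x ⟨k - 1 + j, by omega⟩ ∈ levelExtensionSet Ψ ζ k x j := by
  have hedge : window x j (k - 1 - j) ++ window x (k - 1) j ++ [x ⟨k - 1 + j, by omega⟩] =
      window x j k := by
    rw [← window_one x, window_append x (by omega) rfl,
      window_append x (n := k) (by omega) (by omega)]
  have hlink : window x (k - 1) j ++ [x ⟨k - 1 + j, by omega⟩] = window x (k - 1) (j + 1) := by
    rw [← window_one x, window_append x rfl rfl]
  have hlen : (window x j (k - 1 - j)).length = k - (j + 1) := by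
    rw [length_window x (by omega)]; omega
  have htail : (window x j (k - 1 - j)).tail = window x (j + 1) (k - 1 - (j + 1)) := by
    rw [show k - 1 - j = k - 1 - (j + 1) + 1 by omega, tail_window]
  refine Constellation.mem_extensionSet_linkList Ψ ζ ?_ ?_ (hx _) ?_
  · rw [hedge]
    exact hw.nodup_window hΨ (by omega) le_rfl le_rfl
  · rw [hedge]
    exact hw.toFinset_window_mem (by omega)
  · rwa [hlen, hlink, htail]

lemma ncard_levelExtensionSet_lt (hζ : 0 ≤ ζ) {j : ℕ} (hj : j + 3 ≤ k)
    (h : ¬ LevelLeftConn Ψ ζ k x j) :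
    (levelExtensionSet Ψ ζ k x j).ncard < ζ * #Ψ.verts := by
  have hlen : (window x j (k - 1 - j)).length = k - j - 3 + 2 := by
    rw [length_window x (by omega)]; omega
  rw [LevelLeftConn, show k - j = k - j - 3 + 3 by omega,
    Constellation.leftConn_iff_le_ncard_extensionSet _ _ hlen, not_le] at h
  have hcard : #(Ψ.linkList (window x (k - 1) j)).verts ≤ #Ψ.verts := by
    rw [Constellation.verts_linkList]
    exact card_le_card sdiff_subset
  exact h.trans_le (by gcongr)

lemma levelExtensionSet_congr {y : Fin (2 * k - 3) → V} {j : ℕ}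
    (hxy : ∀ i : Fin (2 * k - 3), (i : ℕ) ≠ k - 1 + j → x i = y i) :
    levelExtensionSet Ψ ζ k x j = levelExtensionSet Ψ ζ k y j := by
  rw [levelExtensionSet, levelExtensionSet,
    window_congr fun i _ hi => hxy i (by omega), window_congr fun i hi _ => hxy i (by omega)]

lemma exists_levelExtensionSet_of_not_leftConn (hk : 2 ≤ k) (hζ : 0 ≤ ζ)
    (hΨ : ∀ e ∈ Ψ.edges, #e = k) (hw : IsWalk Ψ.edges k (2 * k - 3) x) (hx : ∀ i, x i ∈ Ψ.verts)
    (hW : ∀ v ∈ window x (k - 2) 1, v ∈ Ψ.W (window x (k - 1) (k - 2)).toFinset)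
    (hL : ¬ LevelLeftConn Ψ ζ k x 0) :
    ∃ j : Fin (k - 2), x ⟨k - 1 + j, by omega⟩ ∈ levelExtensionSet Ψ ζ k x j ∧
      (levelExtensionSet Ψ ζ k x j).ncard < ζ * #Ψ.verts := by
  have hlast := levelLeftConn_last (ζ := ζ) hk hΨ hw hW
  -- Capping the level at `k - 2` forces the step from failure to success to occur below `k - 2`.
  obtain ⟨j, hj, hj'⟩ := Nat.exists_not_and_succ_of_not_zero_of_exists
    (p := fun j => LevelLeftConn Ψ ζ k x (min j (k - 2))) (by simpa using hL)
    ⟨k - 2, by simpa using hlast⟩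
  have hjk : j < k - 2 := by
    by_contra! h
    exact hj (by rwa [min_eq_right h])
  rw [min_eq_left hjk.le] at hj
  rw [min_eq_left hjk] at hj'
  exact ⟨⟨j, hjk⟩, mem_levelExtensionSet hΨ hw hx (by omega) hj',
    ncard_levelExtensionSet_lt hζ (by omega) hj⟩

lemma ncard_badLevelSet_le (j : Fin (k - 2)) :
    (badLevelSet Ψ ζ k j).ncard ≤ ⌊ζ * #Ψ.verts⌋₊ * #Ψ.verts ^ (2 * k - 3 - 1) :=
  ncard_le_of_coord_mem ⟨k - 1 + j, by omega⟩ Ψ.verts _ _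
    (fun _ => Constellation.extensionSet_finite ..)
    (fun _ _ hxy => levelExtensionSet_congr fun i hi => hxy i (Fin.ne_of_val_ne hi))

lemma mem_iUnion_badLevelSet (hk : 2 ≤ k) (hζ : 0 ≤ ζ) (hΨ : IsUniformConst k Ψ)
    (hx : ∀ i, x i ∈ Ψ.verts) (hw : IsWalk Ψ.edges k (2 * k - 3) x)
    (hW : ∀ v ∈ window x (k - 2) 1, v ∈ Ψ.W (window x (k - 1) (k - 2)).toFinset)
    (hL : ¬ LeftConn k Ψ ζ (window x 0 (k - 1))) :
    x ∈ ⋃ j, badLevelSet Ψ ζ k j := by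
  obtain ⟨j, hmem, hlt⟩ := exists_levelExtensionSet_of_not_leftConn hk hζ
    (fun e he => (hΨ e he).2) hw hx hW hL
  exact Set.mem_iUnion.2 ⟨j, hx, hmem, Nat.le_floor hlt.le⟩

end Levels

/-- Lemma 2.15: in a `k`-uniform constellation `Ψ` there are at most `(k-2) ζ |V(Ψ)|^{2k-3}`
walks `x₁…x_{2k-3}` in `H(Ψ)` with `x_{k-1} ∈ V(R_{x_k…x_{2k-3}})` such that `(x₁,…,x_{k-1})`
fails to be `ζ`-leftconnectable in `Ψ`. -/
theorem stmt8 {V : Type*} [DecidableEq V] (k : ℕ) (hk : 2 ≤ k)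
    (ζ : ℝ) (hζ : 0 < ζ)
    (Ψ : Constellation V) (hΨ : IsUniformConst k Ψ) :
    (({x : Fin (2 * k - 3) → V | (∀ i, x i ∈ Ψ.verts) ∧
        IsWalk Ψ.edges k (2 * k - 3) x ∧
        x ⟨k - 2, by omega⟩ ∈
          Ψ.W (Finset.image (fun j : Fin (k - 2) => x ⟨(k - 1) + j.1, by have := j.2; omega⟩)
            Finset.univ) ∧
        ¬ LeftConn k Ψ ζ
          (List.ofFn (fun j : Fin (k - 1) => x ⟨j.1, by have := j.2; omega⟩))} :
      Set (Fin (2 * k - 3) → V)).ncard : ℝ) ≤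
      ((k : ℝ) - 2) * ζ * (Ψ.verts.card : ℝ) ^ (2 * k - 3) := by
  set N := #Ψ.verts
  have hfin : (⋃ j, badLevelSet Ψ ζ k j).Finite :=
    (Set.Finite.pi fun _ => Ψ.verts.finite_toSet).subset
      (Set.iUnion_subset fun _ x hx i _ => hx.1 i)
  calc _ ≤ ((∑ j, (badLevelSet Ψ ζ k j).ncard : ℕ) : ℝ) := by
        refine Nat.cast_le.2 ((Set.ncard_le_ncard ?_ hfin).trans (Set.ncard_iUnion_le_of_fintype _))
        rintro x ⟨hx, hw, hW, hL⟩
        rw [image_univ_eq_toFinset_window x (by omega)] at hW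
        rw [ofFn_eq_window_zero x (by omega)] at hL
        refine mem_iUnion_badLevelSet hk hζ.le hΨ hx hw ?_ hL
        rwa [window_one x (by omega), List.forall_mem_singleton]
    _ ≤ ∑ _j : Fin (k - 2), ζ * N * (N : ℝ) ^ (2 * k - 3 - 1) := by
      push_cast
      gcongr with j
      calc ((badLevelSet Ψ ζ k j).ncard : ℝ) ≤ (⌊ζ * N⌋₊ * N ^ (2 * k - 3 - 1) : ℕ) := by
            exact_mod_cast ncard_badLevelSet_le j
        _ ≤ ζ * N * (N : ℝ) ^ (2 * k - 3 - 1) := by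
          push_cast
          gcongr
          exact Nat.floor_le (by positivity)
    _ = ((k : ℝ) - 2) * ζ * N ^ (2 * k - 3) := by
      rw [sum_const, card_univ, Fintype.card_fin, nsmul_eq_mul, Nat.cast_sub hk,
        show 2 * k - 3 = 2 * k - 3 - 1 + 1 by omega, pow_succ]
      push_cast
      ring
end

section
/- For every k-partite k-uniform hypergraph F and every ε > 0 there exist ξ > 0 and n₀ ∈ ℕ such that every k-uniform hypergraph H on n ≥ n₀ vertices with at least εn^k edges contains at least ξn^{|V(F)|} copies of F. -/
/-!
Call `g : Fin k → Fin t → W` a box of `A ⊆ W^k` if every transversal `i ↦ g i (a i)` lies in `A`.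
Applying Jensen's inequality once per coordinate (Erdős's box argument) shows that a family of
ordered edges of density `δ` has at least `δ^(t^k) n^(kt)` boxes. Take `t = |V(F)|` and index
the vertices of `F` by `x ↦ (c x, x)`. Each edge of `F` meets every class once, so every box of
the ordered edges of `H` maps each edge of `F` onto a transversal, that is, onto an edge of `H`.
Such a map fails to be injective for at most `|V(F)|² n^(kt-1)` boxes, and each copy of `F`
comes from at most `n^(kt-|V(F)|)` boxes. So `H` contains at least `(ε^(t^k)/2) n^|V(F)|` copies
of `F` once `n` is large.
-/

open Finset Function

lemma pow_sum_div_card_le_sum_pow_div_card {ι : Type*} [Fintype ι] [Nonempty ι] {f : ι → ℝ}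
    (hf : ∀ i, 0 ≤ f i) (n : ℕ) :
    ((∑ i, f i) / Fintype.card ι) ^ n ≤ (∑ i, f i ^ n) / Fintype.card ι := by
  have hcard : (0 : ℝ) < Fintype.card ι := by exact_mod_cast Fintype.card_pos
  cases n with
  | zero => simp [hcard.ne']
  | succ n =>
    rw [div_pow, pow_succ (Fintype.card ι : ℝ) n, ← div_div, div_le_div_iff_of_pos_right hcard]
    exact pow_sum_div_card_le_sum_pow (fun i _ => hf i) n

section Boxes

variable {W : Type*} [Fintype W] [DecidableEq W] {k t : ℕ}

def boxes (t : ℕ) (A : Finset (Fin k → W)) : Finset (Fin k → Fin t → W) :=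
  {g | ∀ a : Fin k → Fin t, (fun i => g i (a i)) ∈ A}

def consFiber (A : Finset (Fin (k + 1) → W)) (x : Fin k → W) : Finset W :=
  {y | Fin.cons y x ∈ A}

def commonLink (A : Finset (Fin (k + 1) → W)) (h : Fin t → W) : Finset (Fin k → W) :=
  {x | ∀ b, h b ∈ consFiber A x}

lemma card_filter_eq_sum_sum_cons {X : Type*} [Fintype X] (P : (Fin (k + 1) → X) → Prop)
    [DecidablePred P] :
    #{f | P f} = ∑ y, ∑ g : Fin k → X, if P (Fin.cons y g) then 1 else 0 := by
  rw [card_filter, ← (Fin.consEquiv fun _ => X).sum_comp, Fintype.sum_prod_type]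
  rfl

lemma card_eq_sum_card_consFiber (A : Finset (Fin (k + 1) → W)) :
    #A = ∑ x, #(consFiber A x) := by
  rw [← filter_univ_mem A, card_filter_eq_sum_sum_cons, sum_comm]
  simp only [consFiber, card_filter, filter_univ_mem]

lemma sum_card_commonLink (A : Finset (Fin (k + 1) → W)) :
    ∑ h : Fin t → W, #(commonLink A h) = ∑ x, #(consFiber A x) ^ t := by
  simp only [commonLink, card_filter]
  rw [sum_comm]
  refine sum_congr rfl fun x _ => ?_
  rw [← Fintype.card_piFinset_const, ← card_filter]
  congr 1
  ext h
  simp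

lemma cons_mem_boxes_iff (A : Finset (Fin (k + 1) → W)) (h : Fin t → W)
    (g : Fin k → Fin t → W) :
    Fin.cons h g ∈ boxes t A ↔ g ∈ boxes t (commonLink A h) := by
  simp only [boxes, commonLink, consFiber, mem_filter, mem_univ, true_and]
  rw [Fin.forall_fin_succ_pi, forall_comm]
  refine forall_congr' fun a => forall_congr' fun b => ?_
  convert Iff.rfl using 2
  ext i
  refine Fin.cases ?_ (fun j => ?_) i <;> simp

lemma card_boxes_succ (A : Finset (Fin (k + 1) → W)) :
    #(boxes t A) = ∑ h : Fin t → W, #(boxes t (commonLink A h)) := by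
  rw [← filter_univ_mem (boxes t A), card_filter_eq_sum_sum_cons]
  simp only [cons_mem_boxes_iff, ← card_filter, filter_univ_mem]

lemma pow_density_le_average_density_commonLink [Nonempty W] (A : Finset (Fin (k + 1) → W)) :
    ((#A : ℝ) / (Fintype.card W : ℝ) ^ (k + 1)) ^ t ≤
      (∑ h : Fin t → W, (#(commonLink A h) : ℝ) / (Fintype.card W : ℝ) ^ k) /
        (Fintype.card W : ℝ) ^ t := by
  set N : ℝ := (Fintype.card W : ℝ)
  have hN : 0 < N := Nat.cast_pos.mpr Fintype.card_pos
  set f : (Fin k → W) → ℝ := fun x => #(consFiber A x) / N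
  have hdens : (#A : ℝ) / N ^ (k + 1) = (∑ x, f x) / N ^ k := by
    rw [card_eq_sum_card_consFiber, Nat.cast_sum, ← sum_div, pow_succ', div_div]
  have hsum : ∑ x, (#(consFiber A x) : ℝ) ^ t = ∑ h : Fin t → W, (#(commonLink A h) : ℝ) := by
    exact_mod_cast (sum_card_commonLink A).symm
  have hjensen : ((∑ x, f x) / N ^ k) ^ t ≤ (∑ x, f x ^ t) / N ^ k := by
    simpa [N] using pow_sum_div_card_le_sum_pow_div_card (f := f) (fun x => by positivity) t
  rw [hdens]
  refine hjensen.trans_eq ?_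
  simp only [f, div_pow, ← sum_div, hsum, div_div, mul_comm]

theorem card_div_pow_pow_mul_le_card_boxes [Nonempty W] (t : ℕ) :
    ∀ {k : ℕ} (A : Finset (Fin k → W)),
      ((#A : ℝ) / (Fintype.card W : ℝ) ^ k) ^ t ^ k * (Fintype.card W : ℝ) ^ (k * t) ≤
        #(boxes t A)
  | 0, A => by
    simp only [pow_zero, div_one, pow_one, zero_mul, mul_one, Nat.cast_le]
    rcases A.eq_empty_or_nonempty with rfl | ⟨x, hx⟩
    · exact Nat.zero_le _
    · have hboxes : boxes t A = univ := eq_univ_of_forall fun g =>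
        mem_filter.mpr ⟨mem_univ _, fun a => Subsingleton.elim x (fun i => g i (a i)) ▸ hx⟩
      calc #A ≤ 1 := card_le_one_of_subsingleton A
        _ = #(boxes t A) := by simp [hboxes]
  | k + 1, A => by
    set N : ℝ := (Fintype.card W : ℝ)
    have hN : 0 < N := Nat.cast_pos.mpr Fintype.card_pos
    set g : (Fin t → W) → ℝ := fun h => #(commonLink A h) / N ^ k
    have hjensen : ((∑ h, g h) / N ^ t) ^ t ^ k ≤ (∑ h, g h ^ t ^ k) / N ^ t := by
      simpa [N] using pow_sum_div_card_le_sum_pow_div_card (f := g) (fun h => by positivity) _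
    calc ((#A : ℝ) / N ^ (k + 1)) ^ t ^ (k + 1) * N ^ ((k + 1) * t)
        = (((#A : ℝ) / N ^ (k + 1)) ^ t) ^ t ^ k * N ^ t * N ^ (k * t) := by
          rw [← pow_mul, ← pow_succ']; ring
      _ ≤ ((∑ h, g h) / N ^ t) ^ t ^ k * N ^ t * N ^ (k * t) := by
          have hδ : 0 ≤ ((#A : ℝ) / N ^ (k + 1)) ^ t := by positivity
          refine mul_le_mul_of_nonneg_right (mul_le_mul_of_nonneg_right ?_ (by positivity))
            (by positivity)
          exact pow_le_pow_left₀ hδ (pow_density_le_average_density_commonLink A) _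
      _ ≤ (∑ h, g h ^ t ^ k) / N ^ t * N ^ t * N ^ (k * t) := by
          refine mul_le_mul_of_nonneg_right (mul_le_mul_of_nonneg_right hjensen (by positivity))
            (by positivity)
      _ = ∑ h, g h ^ t ^ k * N ^ (k * t) := by
          rw [div_mul_cancel₀ _ (by positivity), sum_mul]
      _ ≤ ∑ h, (#(boxes t (commonLink A h)) : ℝ) :=
          sum_le_sum fun h _ => card_div_pow_pow_mul_le_card_boxes t (commonLink A h)
      _ = #(boxes t A) := by rw [card_boxes_succ, Nat.cast_sum]

end Boxes

section Counting

variable {α β W : Type*} [Fintype α] [DecidableEq α] [Fintype β] [Fintype W]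

lemma card_mul_pow_le_of_eqOn_compl (s : Finset (α → W)) (S : Finset α)
    (hs : ∀ f ∈ s, ∀ g ∈ s, (∀ a ∉ S, f a = g a) → f = g) :
    #s * Fintype.card W ^ #S ≤ Fintype.card W ^ Fintype.card α := by
  have hrestrict : #s ≤ Fintype.card (↥(Sᶜ) → W) := by
    refine card_le_card_of_injOn (t := univ) (fun f (a : ↥(Sᶜ)) => f a)
      (fun _ _ => mem_coe.mpr (mem_univ _)) fun f hf g hg hfg => hs f hf g hg fun a ha => ?_
    exact congrFun hfg ⟨a, mem_compl.mpr ha⟩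
  calc #s * Fintype.card W ^ #S ≤ Fintype.card W ^ #Sᶜ * Fintype.card W ^ #S := by
        rw [Fintype.card_fun, Fintype.card_coe] at hrestrict
        exact Nat.mul_le_mul_right _ hrestrict
    _ = Fintype.card W ^ Fintype.card α := by rw [← pow_add, card_compl_add_card]

lemma card_filter_apply_eq_mul_le [DecidableEq W] {a b : α} (hab : a ≠ b) :
    #{f : α → W | f a = f b} * Fintype.card W ≤ Fintype.card W ^ Fintype.card α := by
  simpa using card_mul_pow_le_of_eqOn_compl {f : α → W | f a = f b} {a} fun f hf g hg hfg => by
    funext c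
    by_cases hc : c = a
    · subst hc
      simp only [mem_filter, mem_univ, true_and] at hf hg
      rw [hf, hg, hfg b (by simpa using hab.symm)]
    · exact hfg c (by simpa using hc)

lemma card_filter_not_injective_comp_mul_le [DecidableEq W] {μ : β → α} (hμ : Injective μ) :
    #{f : α → W | ¬Injective (f ∘ μ)} * Fintype.card W ≤
      Fintype.card β ^ 2 * Fintype.card W ^ Fintype.card α := by
  classical
  let offDiag : Finset (β × β) := {p | p.1 ≠ p.2}
  have hcover : ({f : α → W | ¬Injective (f ∘ μ)} : Finset (α → W)) ⊆
      offDiag.biUnion fun p => {f : α → W | f (μ p.1) = f (μ p.2)} := by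
    intro f hf
    obtain ⟨x, y, hxy, hne⟩ := not_injective_iff.mp (mem_filter.mp hf).2
    exact mem_biUnion.mpr ⟨(x, y), by simpa [offDiag] using hne, by simpa using hxy⟩
  calc #{f : α → W | ¬Injective (f ∘ μ)} * Fintype.card W
      ≤ (∑ p ∈ offDiag, #{f : α → W | f (μ p.1) = f (μ p.2)}) * Fintype.card W :=
        Nat.mul_le_mul_right _ ((card_le_card hcover).trans card_biUnion_le)
    _ ≤ ∑ _p ∈ offDiag, Fintype.card W ^ Fintype.card α := by
        rw [sum_mul]
        refine sum_le_sum fun p hp => card_filter_apply_eq_mul_le (hμ.ne ?_)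
        simpa [offDiag] using hp
    _ ≤ Fintype.card β ^ 2 * Fintype.card W ^ Fintype.card α := by
        rw [sum_const, smul_eq_mul]
        refine Nat.mul_le_mul_right _ ((card_filter_le _ _).trans ?_)
        simp [sq]

lemma card_mul_pow_le_card_image_comp_mul [DecidableEq W] {μ : β → α} (hμ : Injective μ)
    (s : Finset (α → W)) :
    #s * Fintype.card W ^ Fintype.card β ≤
      #(s.image (· ∘ μ)) * Fintype.card W ^ Fintype.card α := by
  classical
  have hfiber : ∀ φ : β → W, #{f ∈ s | f ∘ μ = φ} * Fintype.card W ^ Fintype.card β ≤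
      Fintype.card W ^ Fintype.card α := by
    intro φ
    have hS : #(univ.image μ) = Fintype.card β := by rw [card_image_of_injective _ hμ, card_univ]
    rw [← hS]
    refine card_mul_pow_le_of_eqOn_compl _ _ fun f hf g hg hfg => funext fun a => ?_
    by_cases ha : a ∈ univ.image μ
    · obtain ⟨x, -, rfl⟩ := mem_image.mp ha
      have hfx := congrFun (mem_filter.mp hf).2 x
      have hgx := congrFun (mem_filter.mp hg).2 x
      simp only [comp_apply] at hfx hgx
      rw [hfx, hgx]
    · exact hfg a ha
  calc #s * Fintype.card W ^ Fintype.card β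
      = ∑ φ ∈ s.image (· ∘ μ), #{f ∈ s | f ∘ μ = φ} * Fintype.card W ^ Fintype.card β := by
        rw [card_eq_sum_card_image (· ∘ μ) s, sum_mul]
    _ ≤ #(s.image (· ∘ μ)) * Fintype.card W ^ Fintype.card α := by
        simpa using sum_le_sum fun φ _ => hfiber φ

lemma card_div_pow_sub_le_card_image_div_pow [DecidableEq W] [Nonempty W]
    {μ : β → α} (hμ : Injective μ) (s : Finset (α → W)) :
    (#s : ℝ) / (Fintype.card W : ℝ) ^ Fintype.card α - (Fintype.card β : ℝ) ^ 2 / Fintype.card W ≤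
      #({f ∈ s | Injective (f ∘ μ)}.image (· ∘ μ)) / (Fintype.card W : ℝ) ^ Fintype.card β := by
  set N : ℝ := (Fintype.card W : ℝ)
  have hN : 0 < N := Nat.cast_pos.mpr Fintype.card_pos
  have hsplit : (#s : ℝ) = #{f ∈ s | Injective (f ∘ μ)} + #{f ∈ s | ¬Injective (f ∘ μ)} := by
    exact_mod_cast (card_filter_add_card_filter_not _).symm
  have hbad : (#{f ∈ s | ¬Injective (f ∘ μ)} : ℝ) / N ^ Fintype.card α ≤
      (Fintype.card β : ℝ) ^ 2 / N := by
    rw [div_le_div_iff₀ (pow_pos hN _) hN]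
    have hsub : #{f ∈ s | ¬Injective (f ∘ μ)} ≤ #{f : α → W | ¬Injective (f ∘ μ)} :=
      card_le_card (filter_subset_filter _ (subset_univ s))
    simp only [N]
    exact_mod_cast (Nat.mul_le_mul_right _ hsub).trans (card_filter_not_injective_comp_mul_le hμ)
  have hgood : (#{f ∈ s | Injective (f ∘ μ)} : ℝ) / N ^ Fintype.card α ≤
      #({f ∈ s | Injective (f ∘ μ)}.image (· ∘ μ)) / N ^ Fintype.card β := by
    rw [div_le_div_iff₀ (pow_pos hN _) (pow_pos hN _)]
    simp only [N]
    exact_mod_cast card_mul_pow_le_card_image_comp_mul hμ _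
  rw [hsplit, add_div]
  linarith

end Counting

section Copies

variable {W VF : Type*} [DecidableEq W] {k : ℕ}

def orderedEdges (k : ℕ) (EH : Finset (Finset W)) [Fintype W] : Finset (Fin k → W) :=
  {w | Injective w ∧ univ.image w ∈ EH}

lemma card_le_card_orderedEdges [Fintype W] {EH : Finset (Finset W)} (hEH : ∀ e ∈ EH, #e = k) :
    #EH ≤ #(orderedEdges k EH) := by
  refine card_le_card_of_surjOn (fun w => univ.image w) fun e he => ?_
  let σ := (e.equivFinOfCardEq (hEH e he)).symm
  have himage : univ.image (fun i => (σ i : W)) = e := by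
    ext x
    refine ⟨fun hx => ?_, fun hx => mem_image.mpr ⟨σ.symm ⟨x, hx⟩, mem_univ _, by simp⟩⟩
    obtain ⟨i, -, rfl⟩ := mem_image.mp hx
    exact (σ i).2
  refine ⟨fun i => σ i, mem_filter.mpr ⟨mem_univ _, Subtype.val_injective.comp σ.injective, ?_⟩,
    himage⟩
  rw [himage]
  exact he

lemma pow_mul_le_card_boxes_orderedEdges [Fintype W] [Nonempty W] {EH : Finset (Finset W)}
    (hEH : ∀ e ∈ EH, #e = k) {ε : ℝ} (hε : 0 ≤ ε)
    (hcard : ε * (Fintype.card W : ℝ) ^ k ≤ #EH) (t : ℕ) :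
    ε ^ t ^ k * (Fintype.card W : ℝ) ^ (k * t) ≤ #(boxes t (orderedEdges k EH)) := by
  have hdens : ε ≤ #(orderedEdges k EH) / (Fintype.card W : ℝ) ^ k := by
    rw [le_div_iff₀ (pow_pos (Nat.cast_pos.mpr Fintype.card_pos) k)]
    exact hcard.trans (by exact_mod_cast card_le_card_orderedEdges hEH)
  exact (mul_le_mul_of_nonneg_right (pow_le_pow_left₀ hε hdens _) (by positivity)).trans
    (card_div_pow_pow_mul_le_card_boxes t _)

lemma exists_transversal_eq [DecidableEq VF] {c : VF → Fin k} {e : Finset VF}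
    (he : ∀ j, #{v ∈ e | c v = j} = 1) :
    ∃ r : Fin k → VF, (∀ j, c (r j) = j) ∧ univ.image r = e := by
  choose r hr using fun j => card_eq_one.mp (he j)
  have hmem : ∀ j, r j ∈ e ∧ c (r j) = j := fun j =>
    mem_filter.mp (hr j ▸ mem_singleton_self (r j))
  refine ⟨r, fun j => (hmem j).2, ?_⟩
  ext x
  refine ⟨fun hx => ?_, fun hx => mem_image.mpr ⟨c x, mem_univ _, ?_⟩⟩
  · obtain ⟨j, -, rfl⟩ := mem_image.mp hx
    exact (hmem j).1
  · have : x ∈ ({r (c x)} : Finset VF) := hr (c x) ▸ mem_filter.mpr ⟨hx, rfl⟩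
    exact (mem_singleton.mp this).symm

lemma image_mem_of_mem_boxes [Fintype W] {t : ℕ} {EH : Finset (Finset W)}
    {g : Fin k → Fin t → W} (hg : g ∈ boxes t (orderedEdges k EH)) (c : VF → Fin k)
    (ι : VF → Fin t) {e : Finset VF} (he : ∀ j, #{v ∈ e | c v = j} = 1) :
    e.image (fun x => g (c x) (ι x)) ∈ EH := by
  classical
  obtain ⟨r, hcr, rfl⟩ := exists_transversal_eq he
  have htransversal := (mem_filter.mp ((mem_filter.mp hg).2 (ι ∘ r))).2.2
  rw [image_image]
  convert htransversal using 2
  funext j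
  simp [hcr]

end Copies

theorem stmt13_general (k : ℕ) {VF : Type} [Fintype VF]
    (EF : Finset (Finset VF))
    (c : VF → Fin k)
    (hpart : ∀ e ∈ EF, ∀ j : Fin k, (e.filter fun v => c v = j).card = 1)
    (ε : ℝ) (hε : 0 < ε) :
    ∃ ξ : ℝ, 0 < ξ ∧ ∃ n₀ : ℕ,
      ∀ (W : Type) [Fintype W] [DecidableEq W] (EH : Finset (Finset W)),
        (∀ e ∈ EH, e.card = k) →
        n₀ ≤ Fintype.card W →
        ε * (Fintype.card W : ℝ) ^ k ≤ (EH.card : ℝ) →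
        ξ * (Fintype.card W : ℝ) ^ (Fintype.card VF) ≤
          (({φ : VF → W | Function.Injective φ ∧ ∀ e ∈ EF, e.image φ ∈ EH} :
            Set (VF → W)).ncard : ℝ) := by
  set v := Fintype.card VF
  set ξ := ε ^ v ^ k
  refine ⟨ξ / 2, by positivity, ⌈2 * (v : ℝ) ^ 2 / ξ⌉₊ + 1, fun W _ _ EH hEH hn hcard => ?_⟩
  have : Nonempty W := Fintype.card_pos_iff.mp (by omega)
  set N : ℝ := (Fintype.card W : ℝ)
  have hN : 0 < N := Nat.cast_pos.mpr Fintype.card_pos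
  have hcollisions : (v : ℝ) ^ 2 / N ≤ ξ / 2 := by
    have : 2 * (v : ℝ) ^ 2 / ξ ≤ N :=
      (Nat.le_ceil _).trans (by simp only [N]; exact_mod_cast (Nat.le_succ _).trans hn)
    rw [div_le_iff₀ (by positivity)] at this
    rw [div_le_iff₀ hN]
    linarith
  let μ : VF → Fin k × Fin v := fun x => (c x, Fintype.equivFin VF x)
  have hμ : Injective μ := fun x y hxy => (Fintype.equivFin VF).injective (congrArg Prod.snd hxy)
  let s := (boxes v (orderedEdges k EH)).image uncurry
  have hboxes : ξ ≤ #s / N ^ (k * v) := by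
    rw [le_div_iff₀ (by positivity), card_image_of_injective _ uncurry_injective]
    exact pow_mul_le_card_boxes_orderedEdges hEH hε.le hcard v
  let copies := {f ∈ s | Injective (f ∘ μ)}.image (· ∘ μ)
  have hcopies : (copies : Set (VF → W)) ⊆ {φ | Injective φ ∧ ∀ e ∈ EF, e.image φ ∈ EH} := by
    intro φ hφ
    obtain ⟨f, hf, rfl⟩ := mem_image.mp hφ
    obtain ⟨hfs, hinj⟩ := mem_filter.mp hf
    obtain ⟨g, hg, rfl⟩ := mem_image.mp hfs
    exact ⟨hinj, fun e he => image_mem_of_mem_boxes hg c _ (hpart e he)⟩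
  have hinjective := card_div_pow_sub_le_card_image_div_pow hμ s
  simp only [Fintype.card_prod, Fintype.card_fin] at hinjective
  calc ξ / 2 * N ^ v ≤ #copies := (le_div_iff₀ (by positivity)).mp (by linarith)
    _ ≤ _ := by exact_mod_cast Set.ncard_coe_finset copies ▸ Set.ncard_le_ncard hcopies

/-- Supersaturation (Erdős–Simonovits): for every `k`-partite `k`-uniform hypergraph `F`
and every `ε > 0` there are `ξ > 0` and `n₀` such that every `k`-uniform hypergraph on
`n ≥ n₀` vertices with at least `ε n^k` edges contains at least `ξ n^{|V(F)|}` copies of `F`. -/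
theorem stmt13 (k : ℕ) {VF : Type} [Fintype VF] [DecidableEq VF]
    (EF : Finset (Finset VF)) (hEFu : ∀ e ∈ EF, e.card = k)
    (c : VF → Fin k)
    (hpart : ∀ e ∈ EF, ∀ j : Fin k, (e.filter fun v => c v = j).card = 1)
    (ε : ℝ) (hε : 0 < ε) :
    ∃ ξ : ℝ, 0 < ξ ∧ ∃ n₀ : ℕ,
      ∀ (W : Type) [Fintype W] [DecidableEq W] (EH : Finset (Finset W)),
        (∀ e ∈ EH, e.card = k) →
        n₀ ≤ Fintype.card W →
        ε * (Fintype.card W : ℝ) ^ k ≤ (EH.card : ℝ) →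
        ξ * (Fintype.card W : ℝ) ^ (Fintype.card VF) ≤
          (({φ : VF → W | Function.Injective φ ∧ ∀ e ∈ EF, e.image φ ∈ EH} :
            Set (VF → W)).ncard : ℝ) :=
  stmt13_general k EF c hpart ε hε
end

section
/- Let k ≥ 3, ζ > 0, and let Ψ be a k-uniform constellation in which a k-tuple (a₁,…,a_k) of distinct vertices admits an ((a₁,…,a_k), ζ)-absorber A = (u, x, w, b₁,…,b_k). Suppose a path P contains as vertex-disjoint subpaths the k + 1 pre-absorption paths u·w (the 2k-vertex path u₁…u_k w₁…w_k) and, for each i ∈ [k], the (2k−1)-vertex path b_{i1}…b_{i(k−1)} x_i b_{ik}…b_{i(2k−2)}, and P avoids a₁,…,a_k. Then replacing each subpath b_{i1}…b_{i(k−1)} x_i b_{ik}…b_{i(2k−2)} by b_{i1}…b_{i(k−1)} a_i b_{ik}…b_{i(2k−2)} and the subpath u·w by u·x·w yields a path Q in H(Ψ) with V(Q) = V(P) ∪ {a₁,…,a_k} having the same end-(k−1)-tuples as P. -/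
open Finset

/-!
Every `k`-window of a concatenation lies inside one piece or straddles a junction, where it only
sees the first or last `k - 1` vertices of the neighbouring piece. Both replacements,
`u·w ↦ u·x·w` and `bᵢ⁻ xᵢ bᵢ⁺ ↦ bᵢ⁻ aᵢ bᵢ⁺` (where `bᵢ = bᵢ⁻ bᵢ⁺` is split after `k - 1`
vertices), keep these end-tuples, and the new pieces are walks:
`u·x·w` by assumption, and `bᵢ⁻ aᵢ bᵢ⁺` because each of its `k`-windows is `aᵢ` together with a
`(k - 1)`-window of `bᵢ`, an edge of the link of `aᵢ`. Hence every window of `Q` is an edge and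
`Q` has the end-tuples of `P`. As multisets `Q = P + {a₁, …, a_k}`, since every `xᵢ` merely moves
into `u·x·w`; so `Q` repeats no vertex, because `P` avoids the `aᵢ`.
-/

section Lists

variable {α : Type*}

theorem List.take_drop_append_of_add_le_length {s t : List α} {i n : ℕ}
    (h : i + n ≤ s.length) : ((s ++ t).drop i).take n = (s.drop i).take n := by
  rw [List.drop_append_of_le_length (by omega),
    List.take_append_of_le_length (by simp only [List.length_drop]; omega)]

theorem List.take_drop_append_of_le_length_le {s t : List α} {i n : ℕ}
    (h₁ : i ≤ s.length) (h₂ : s.length ≤ i + n) :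
    ((s ++ t).drop i).take n = s.drop i ++ t.take (i + n - s.length) := by
  rw [List.drop_append_of_le_length h₁, List.take_append,
    List.take_of_length_le (by simp only [List.length_drop]; omega), List.length_drop]
  congr 2
  omega

def EndsAgree (n : ℕ) (l l' : List α) : Prop :=
  n ≤ l.length ∧ n ≤ l'.length ∧ l.take n = l'.take n ∧ l.reverse.take n = l'.reverse.take n

theorem EndsAgree.reverse {n : ℕ} {l l' : List α} (h : EndsAgree n l l') :
    EndsAgree n l.reverse l'.reverse := by
  obtain ⟨hl, hl', htake, hrev⟩ := h
  exact ⟨by simpa using hl, by simpa using hl', hrev, by simpa using htake⟩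

theorem endsAgree_append_append {n : ℕ} {s t : List α} (m m' : List α)
    (hs : n ≤ s.length) (ht : n ≤ t.length) : EndsAgree n (s ++ m ++ t) (s ++ m' ++ t) := by
  refine ⟨by simp only [List.length_append]; omega, by simp only [List.length_append]; omega,
    ?_, ?_⟩
  · rw [List.append_assoc, List.append_assoc, List.take_append_of_le_length hs,
      List.take_append_of_le_length hs]
  · have ht' : n ≤ t.reverse.length := by simpa using ht
    simp only [List.reverse_append, List.append_assoc, List.take_append_of_le_length ht']

theorem List.take_flatten_eq_of_forall₂ {n : ℕ} {ps qs : List (List α)}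
    (h : List.Forall₂ (fun p q => p = q ∨ EndsAgree n p q) ps qs) :
    ps.flatten.take n = qs.flatten.take n := by
  induction h with
  | nil => rfl
  | @cons p q ps qs hpq _ ih =>
    rcases hpq with rfl | ⟨hp, hq, htake, -⟩
    · have ih' := congrArg (List.take (n - p.length)) ih
      simp only [List.take_take, Nat.sub_le, min_eq_left] at ih'
      rw [List.flatten_cons, List.flatten_cons, List.take_append, List.take_append, ih']
    · rw [List.flatten_cons, List.flatten_cons, List.take_append_of_le_length hp,
        List.take_append_of_le_length hq, htake]

theorem List.reverse_take_flatten_eq_of_forall₂ {n : ℕ} {ps qs : List (List α)}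
    (h : List.Forall₂ (fun p q => p = q ∨ EndsAgree n p q) ps qs) :
    ps.flatten.reverse.take n = qs.flatten.reverse.take n := by
  rw [List.reverse_flatten, List.reverse_flatten]
  refine List.take_flatten_eq_of_forall₂ (List.forall₂_reverse_iff.2 ?_)
  rw [List.forall₂_map_left_iff, List.forall₂_map_right_iff]
  exact h.imp fun p q hpq => hpq.imp (congrArg _) EndsAgree.reverse

theorem Multiset.coe_ofFn_eq_sum {n : ℕ} (f : Fin n → α) :
    (List.ofFn f : Multiset α) = ∑ i, {f i} := by
  rw [← Fin.univ_val_map, ← Multiset.sum_map_singleton (Finset.univ.val.map f),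
    Multiset.map_map]
  rfl

theorem Multiset.coe_flatten_ofFn {n : ℕ} (f : Fin n → List α) :
    ((List.ofFn f).flatten : Multiset α) = ∑ i, (f i : Multiset α) := by
  rw [← Multiset.coe_join, List.map_ofFn, ← Fin.univ_val_map]
  simp [Finset.sum_eq_multiset_sum, Multiset.join]

end Lists

section Walks

variable {V : Type*} [DecidableEq V] {E : Finset (Finset V)} {k : ℕ}

def IsWalkList (E : Finset (Finset V)) (k : ℕ) (l : List V) : Prop :=
  ∀ i : ℕ, i + k ≤ l.length → ((l.drop i).take k).toFinset ∈ E

theorem IsWalkList.of_infix {l₁ l₂ : List V} (hw : IsWalkList E k l₂) (h : l₁ <:+: l₂) :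
    IsWalkList E k l₁ := by
  obtain ⟨s, t, rfl⟩ := h
  intro i hi
  have hw' := hw (s.length + i) (by simp only [List.length_append]; omega)
  rwa [List.append_assoc, List.drop_length_add_append,
    List.take_drop_append_of_add_le_length hi] at hw'

/-- Every `k`-window of `l₁ ++ m ++ l₂` lies in `l₁ ++ m` or in `m ++ l₂`, since it cannot contain
all of `m` together with vertices on both sides. -/
theorem IsWalkList.append_append {l₁ m l₂ : List V} (hm : k - 1 ≤ m.length)
    (h₁ : IsWalkList E k (l₁ ++ m)) (h₂ : IsWalkList E k (m ++ l₂)) :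
    IsWalkList E k (l₁ ++ m ++ l₂) := by
  intro i hi
  by_cases hleft : i + k ≤ (l₁ ++ m).length
  · rw [List.take_drop_append_of_add_le_length hleft]
    exact h₁ i hleft
  · simp only [List.length_append] at hi hleft
    have hi' : l₁.length + (i - l₁.length) = i := by omega
    rw [List.append_assoc, ← hi', List.drop_length_add_append]
    exact h₂ _ (by simp only [List.length_append]; omega)

theorem IsWalkList.append_of_take_eq {s M M' : List V} (h : IsWalkList E k (s ++ M))
    (hM' : IsWalkList E k M') (hlen : k - 1 ≤ M'.length)
    (htake : M.take (k - 1) = M'.take (k - 1)) : IsWalkList E k (s ++ M') := by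
  have hpre : IsWalkList E k (s ++ M'.take (k - 1)) :=
    htake ▸ h.of_infix ((List.prefix_append_right_inj s).2 (List.take_prefix _ _)).isInfix
  rw [← List.take_append_drop (k - 1) M'] at hM' ⊢
  rw [← List.append_assoc]
  exact hpre.append_append (by simpa using hlen) hM'

theorem IsWalkList.append_of_reverse_take_eq {M M' t : List V} (h : IsWalkList E k (M ++ t))
    (hM' : IsWalkList E k M') (hlen : k - 1 ≤ M'.length)
    (hlast : M.reverse.take (k - 1) = M'.reverse.take (k - 1)) : IsWalkList E k (M' ++ t) := by
  rw [List.take_reverse, List.take_reverse, List.reverse_inj] at hlast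
  have hsuf : IsWalkList E k (M'.drop (M'.length - (k - 1)) ++ t) :=
    hlast ▸ h.of_infix (List.suffix_append_self_iff.2 (List.drop_suffix _ _)).isInfix
  rw [← List.take_append_drop (M'.length - (k - 1)) M'] at hM' ⊢
  exact hM'.append_append (by simp only [List.length_drop]; omega) hsuf

theorem IsWalkList.splice {s M M' t : List V} (h : IsWalkList E k (s ++ M ++ t))
    (hM' : IsWalkList E k M') (hends : EndsAgree (k - 1) M M') :
    IsWalkList E k (s ++ M' ++ t) := by
  have hleft := (h.of_infix (List.prefix_append _ _).isInfix).append_of_take_eq hM'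
    hends.2.1 hends.2.2.1
  rw [List.append_assoc] at h
  have hright := (h.of_infix (List.suffix_append _ _).isInfix).append_of_reverse_take_eq hM'
    hends.2.1 hends.2.2.2
  exact hleft.append_append hends.2.1 hright

theorem IsWalkList.flatten_of_forall₂ {ps qs : List (List V)}
    (h : List.Forall₂ (fun p q => p = q ∨ EndsAgree (k - 1) p q ∧ IsWalkList E k q) ps qs)
    (hw : IsWalkList E k ps.flatten) : IsWalkList E k qs.flatten := by
  suffices ∀ s, IsWalkList E k (s ++ ps.flatten) → IsWalkList E k (s ++ qs.flatten) by
    simpa using this [] (by simpa using hw)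
  clear hw
  induction h with
  | nil => exact fun s hs => hs
  | @cons p q ps qs hpq _ ih =>
    intro s hs
    rw [List.flatten_cons, ← List.append_assoc] at hs ⊢
    rcases hpq with rfl | ⟨hends, hq⟩
    · exact ih _ hs
    · exact ih _ (hs.splice hq hends)

end Walks

theorem Constellation.insert_mem_edges_of_mem_link {V : Type*} [DecidableEq V]
    {Ψ : Constellation V} {z : V} {s : Finset V} (h : s ∈ (Ψ.link {z}).edges) :
    insert z s ∈ Ψ.edges := by
  obtain ⟨e, he, rfl⟩ := Finset.mem_image.1 h
  rw [Finset.mem_filter, Finset.singleton_subset_iff] at he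
  rw [Finset.sdiff_singleton_eq_erase, Finset.insert_erase he.2]
  exact he.1

/-- Each `k`-window of `l` with `z` inserted after position `k - 1` is `z` together with a
`(k - 1)`-window of `l`; the length bound makes every window pass through `z`. -/
theorem IsWalkList.take_append_singleton_append_drop {V : Type*} [DecidableEq V]
    {Ψ : Constellation V} {k : ℕ} {z : V} {l : List V} (hk : 0 < k) (hl : l.length ≤ 2 * (k - 1))
    (h : IsWalkList (Ψ.link {z}).edges (k - 1) l) :
    IsWalkList Ψ.edges k (l.take (k - 1) ++ [z] ++ l.drop (k - 1)) := by
  intro i hi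
  simp only [List.length_append, List.length_take, List.length_singleton,
    List.length_drop] at hi
  have hs : (l.take (k - 1)).length = k - 1 := by simp only [List.length_take]; omega
  have hlink := h i (by omega)
  rw [← List.take_append_drop (k - 1) l, List.take_drop_append_of_le_length_le (by omega)
    (by omega), hs, Nat.add_sub_cancel] at hlink
  rw [List.append_assoc, List.take_drop_append_of_le_length_le (by omega) (by omega), hs,
    show i + k - (k - 1) = i + 1 by omega, List.singleton_append, List.take_succ_cons,
    List.toFinset_eq_of_perm _ _ List.perm_middle, List.toFinset_cons]
  exact Constellation.insert_mem_edges_of_mem_link hlink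

section Interleave

variable {α : Type*} {n m : ℕ} (c : Fin (n + 1) → List α)

def interleave (T : Fin n → List α) : List α :=
  (List.ofFn fun i => c i.castSucc ++ T i).flatten ++ c (Fin.last n)

def interleavePieces (T : Fin n → List α) : List (List α) :=
  (List.ofFn fun i => [c i.castSucc, T i]).flatten ++ [c (Fin.last n)]

theorem flatten_interleavePieces (T : Fin n → List α) :
    (interleavePieces c T).flatten = interleave c T := by
  simp [interleavePieces, interleave, List.flatten_flatten, List.map_ofFn, Function.comp_def]

theorem forall₂_interleavePieces {R : List α → List α → Prop} (hR : ∀ l, R l l)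
    {T T' : Fin n → List α} (hT : ∀ i, R (T i) (T' i)) :
    List.Forall₂ R (interleavePieces c T) (interleavePieces c T') := by
  refine List.rel_append (List.rel_flatten ?_) (.cons (hR _) .nil)
  simp only [List.ofFn_eq_map, List.forall₂_map_left_iff, List.forall₂_map_right_iff]
  exact List.forall₂_same.2 fun i _ => .cons (hR _) (.cons (hT i) .nil)

theorem coe_interleave (T : Fin n → List α) :
    (interleave c T : Multiset α) = ∑ i, (c i : Multiset α) + ∑ i, (T i : Multiset α) := by
  rw [interleave, ← Multiset.coe_add, Multiset.coe_flatten_ofFn, Fin.sum_univ_castSucc]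
  simp only [← Multiset.coe_add, Finset.sum_add_distrib]
  abel

variable {c} {T T' : Fin n → List α}

theorem take_interleave_eq (h : ∀ i, EndsAgree m (T i) (T' i)) :
    (interleave c T).take m = (interleave c T').take m := by
  rw [← flatten_interleavePieces, ← flatten_interleavePieces]
  exact List.take_flatten_eq_of_forall₂
    (forall₂_interleavePieces c (fun _ => .inl rfl) fun i => .inr (h i))

theorem reverse_take_interleave_eq (h : ∀ i, EndsAgree m (T i) (T' i)) :
    (interleave c T).reverse.take m = (interleave c T').reverse.take m := by
  rw [← flatten_interleavePieces, ← flatten_interleavePieces]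
  exact List.reverse_take_flatten_eq_of_forall₂
    (forall₂_interleavePieces c (fun _ => .inl rfl) fun i => .inr (h i))

theorem IsWalkList.interleave [DecidableEq α] {E : Finset (Finset α)} {k : ℕ}
    (h : ∀ i, EndsAgree (k - 1) (T i) (T' i) ∧ IsWalkList E k (T' i))
    (hw : IsWalkList E k (interleave c T)) : IsWalkList E k (interleave c T') := by
  rw [← flatten_interleavePieces] at hw ⊢
  exact IsWalkList.flatten_of_forall₂
    (forall₂_interleavePieces c (fun _ => .inl rfl) fun i => .inr (h i)) hw

end Interleave

theorem IsPathList.interleave_of_endsAgree {V : Type*} [DecidableEq V] {E : Finset (Finset V)}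
    {k n : ℕ} {c : Fin (n + 1) → List V} {T T' : Fin n → List V} {extra : List V}
    (hP : IsPathList E k (interleave c T))
    (hT : ∀ i, EndsAgree (k - 1) (T i) (T' i) ∧ IsWalkList E k (T' i))
    (hcount : ∑ i, (T' i : Multiset V) = ∑ i, (T i : Multiset V) + extra)
    (hextra : extra.Nodup) (hdisj : ∀ v ∈ extra, v ∉ interleave c T) :
    IsPathList E k (interleave c T') ∧
      (interleave c T').toFinset = (interleave c T).toFinset ∪ extra.toFinset ∧
      (interleave c T').take (k - 1) = (interleave c T).take (k - 1) ∧
      (interleave c T').reverse.take (k - 1) = (interleave c T).reverse.take (k - 1) := by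
  have hperm : (interleave c T').Perm (interleave c T ++ extra) := by
    rw [← Multiset.coe_eq_coe, ← Multiset.coe_add, coe_interleave, coe_interleave, hcount]
    abel
  have hnodup : (interleave c T ++ extra).Nodup :=
    List.nodup_append.2 ⟨hP.1, hextra, fun _ hx y hy hxy => hdisj y hy (hxy ▸ hx)⟩
  refine ⟨⟨hperm.nodup_iff.2 hnodup, IsWalkList.interleave hT hP.2⟩, ?_, ?_, ?_⟩
  · rw [List.toFinset_eq_of_perm _ _ hperm, List.toFinset_append]
  · exact (take_interleave_eq fun i => (hT i).1).symm
  · exact (reverse_take_interleave_eq fun i => (hT i).1).symm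

section AbsorberPiece

variable {V : Type*} {k : ℕ}

/-- The pre-absorption paths (`head = u·w`, `z = x`) or their absorbing versions
(`head = u·x·w`, `z = a`), with `B j = bⱼ`. -/
def absorberPiece (k : ℕ) (head : List V) (z : Fin k → V) (B : Fin k → List V)
    (v : Fin (k + 1)) : List V :=
  if _ : v.1 = 0 then head
  else (B ⟨v.1 - 1, by omega⟩).take (k - 1) ++ [z ⟨v.1 - 1, by omega⟩] ++
    (B ⟨v.1 - 1, by omega⟩).drop (k - 1)

theorem absorberPiece_zero (head : List V) (z : Fin k → V) (B : Fin k → List V) :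
    absorberPiece k head z B 0 = head := rfl

theorem absorberPiece_succ (head : List V) (z : Fin k → V) (B : Fin k → List V) (j : Fin k) :
    absorberPiece k head z B j.succ = (B j).take (k - 1) ++ [z j] ++ (B j).drop (k - 1) := rfl

theorem sum_coe_absorberPiece (head : List V) (z : Fin k → V) (B : Fin k → List V) :
    ∑ v, (absorberPiece k head z B v : Multiset V) =
      head + List.ofFn z + ∑ j, (B j : Multiset V) := by
  have hmid : ∀ (s t : List V) (y : V),
      ((s ++ [y] ++ t : List V) : Multiset V) = {y} + ↑(s ++ t) := fun s t y => by
    rw [List.append_assoc, List.singleton_append]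
    exact Multiset.coe_eq_coe.2 List.perm_middle
  simp only [Fin.sum_univ_succ, absorberPiece_zero, absorberPiece_succ, hmid,
    List.take_append_drop, Finset.sum_add_distrib, Multiset.coe_ofFn_eq_sum]
  abel

theorem endsAgree_absorberPiece {head head' : List V} (hhead : EndsAgree (k - 1) head head')
    (z z' : Fin k → V) {B : Fin k → List V} (hB : ∀ j, 2 * (k - 1) ≤ (B j).length)
    (v : Fin (k + 1)) :
    EndsAgree (k - 1) (absorberPiece k head z B v) (absorberPiece k head' z' B v) := by
  induction v using Fin.cases with
  | zero => exact hhead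
  | succ j =>
    have := hB j
    exact endsAgree_append_append _ _ (by simp; omega) (by simp; omega)

theorem isWalkList_absorberPiece [DecidableEq V] {Ψ : Constellation V} (hk : 0 < k)
    {head : List V} (hhead : IsWalkList Ψ.edges k head) {z : Fin k → V} {B : Fin k → List V}
    (hBlen : ∀ j, (B j).length ≤ 2 * (k - 1))
    (hB : ∀ j, IsWalkList (Ψ.link {z j}).edges (k - 1) (B j)) (v : Fin (k + 1)) :
    IsWalkList Ψ.edges k (absorberPiece k head z B v) := by
  induction v using Fin.cases with
  | zero => exact hhead
  | succ j => exact IsWalkList.take_append_singleton_append_drop hk (hBlen j) (hB j)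

end AbsorberPiece

/-- The absorption mechanism: if a path `P` in `H(Ψ)` avoiding `a₁, …, a_k` decomposes into
connecting segments `c` interleaved (in some order `π`) with the `k+1` pre-absorption paths
of an `((a₁,…,a_k), ζ)`-absorber `(u, x, w, b₁, …, b_k)`, then replacing each pre-absorption
path `b_{i,1}…b_{i,k-1} xᵢ b_{i,k}…b_{i,2k-2}` by `b_{i,1}…b_{i,k-1} aᵢ b_{i,k}…b_{i,2k-2}`
and `u·w` by `u·x·w` yields a path `Q` in `H(Ψ)` with `V(Q) = V(P) ∪ {a₁,…,a_k}` and the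
same end-`(k-1)`-tuples as `P`. -/
theorem stmt18 {V : Type*} [DecidableEq V] (k : ℕ) (hk : 3 ≤ k)
    (ζ : ℝ)
    (Ψ : Constellation V)
    (a u xv w : Fin k → V) (b : Fin k → Fin (2 * k - 2) → V)
    (ha : Function.Injective a)
    -- `u·x·w` and `u·w` are paths in `H(Ψ)`:
    (hpuxw : IsPathList Ψ.edges k (List.ofFn u ++ List.ofFn xv ++ List.ofFn w))
    -- each `bᵢ` is a `(k-1)`-uniform path in both links with `ζ`-connectable end-tuples:
    (hb : ∀ i : Fin k,
      IsPathList (Ψ.link {a i}).edges (k - 1) (List.ofFn (b i)) ∧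
      IsPathList (Ψ.link {xv i}).edges (k - 1) (List.ofFn (b i)) ∧
      Conn k Ψ ζ ((List.ofFn (b i)).take (k - 1)) ∧
      Conn k Ψ ζ ((List.ofFn (b i)).drop (k - 1)))
    -- `P` is a path in `H(Ψ)` avoiding the `aᵢ`:
    (P : List V) (hP : IsPathList Ψ.edges k P)
    (hPa : ∀ i : Fin k, a i ∉ P)
    -- `P` contains the `k+1` pre-absorption paths as (vertex-disjoint) subpaths:
    (π : Equiv.Perm (Fin (k + 1))) (c : Fin (k + 2) → List V)
    (hdecomp : P = (List.ofFn (fun i : Fin (k + 1) =>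
        c ⟨i.1, by have := i.2; omega⟩ ++
        (if h0 : (π i).1 = 0 then List.ofFn u ++ List.ofFn w
         else
           (List.ofFn (b ⟨(π i).1 - 1, by have := (π i).2; omega⟩)).take (k - 1) ++
           [xv ⟨(π i).1 - 1, by have := (π i).2; omega⟩] ++
           (List.ofFn (b ⟨(π i).1 - 1, by have := (π i).2; omega⟩)).drop (k - 1)))).flatten ++
        c ⟨k + 1, by omega⟩) :
    ∃ Q : List V,
      Q = (List.ofFn (fun i : Fin (k + 1) =>
        c ⟨i.1, by have := i.2; omega⟩ ++
        (if h0 : (π i).1 = 0 then List.ofFn u ++ List.ofFn xv ++ List.ofFn w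
         else
           (List.ofFn (b ⟨(π i).1 - 1, by have := (π i).2; omega⟩)).take (k - 1) ++
           [a ⟨(π i).1 - 1, by have := (π i).2; omega⟩] ++
           (List.ofFn (b ⟨(π i).1 - 1, by have := (π i).2; omega⟩)).drop (k - 1)))).flatten ++
        c ⟨k + 1, by omega⟩ ∧
      IsPathList Ψ.edges k Q ∧
      Q.toFinset = P.toFinset ∪ Finset.image a Finset.univ ∧
      Q.take (k - 1) = P.take (k - 1) ∧
      Q.reverse.take (k - 1) = P.reverse.take (k - 1) := by
  have hk1 : 0 < k := by omega
  set B : Fin k → List V := fun j => List.ofFn (b j)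
  have hB : ∀ j, (B j).length = 2 * (k - 1) := fun j => by simp only [B, List.length_ofFn]; omega
  set SP := absorberPiece k (List.ofFn u ++ List.ofFn w) xv B
  set SQ := absorberPiece k (List.ofFn u ++ List.ofFn xv ++ List.ofFn w) a B
  have hPSP : P = interleave c (SP ∘ π) := hdecomp
  have hends : EndsAgree (k - 1) (List.ofFn u ++ List.ofFn w)
      (List.ofFn u ++ List.ofFn xv ++ List.ofFn w) := by
    simpa using endsAgree_append_append (s := List.ofFn u) (t := List.ofFn w) [] (List.ofFn xv)
      (by simp) (by simp)
  have hcount : ∑ i, (SQ (π i) : Multiset V) = ∑ i, (SP (π i) : Multiset V) + List.ofFn a := by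
    rw [Equiv.sum_comp π (fun v => (SQ v : Multiset V)),
      Equiv.sum_comp π (fun v => (SP v : Multiset V)), sum_coe_absorberPiece,
      sum_coe_absorberPiece]
    simp only [← Multiset.coe_add]
    abel
  obtain ⟨hQ, hQverts, hQstart, hQend⟩ := IsPathList.interleave_of_endsAgree (T := SP ∘ π)
    (T' := SQ ∘ π) (hPSP ▸ hP)
    (fun i => ⟨endsAgree_absorberPiece hends xv a (fun j => (hB j).ge) (π i),
      isWalkList_absorberPiece hk1 hpuxw.2 (fun j => (hB j).le) (fun j => (hb j).1.2) (π i)⟩)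
    hcount (List.nodup_ofFn.2 ha)
    (fun v hv => by obtain ⟨i, rfl⟩ := List.mem_ofFn.1 hv; exact hPSP ▸ hPa i)
  rw [← hPSP] at hQverts hQstart hQend
  refine ⟨interleave c (SQ ∘ π), rfl, hQ, ?_, hQstart, hQend⟩
  rw [hQverts, Fin.univ_image_def]
end
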